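/- arXiv:2604.06735 — 3 statements merged into one kernel-verified Lean document; each statement's English description precedes it below -/
import Mathlib

section
/- For n >= 1, the number of ascent sequences of length n avoiding both patterns 0112 and 0120 equals 2^{n-1} + C(n+1, 4), where C denotes binomial coefficients. -/
/-- Number of ascents of a sequence (list) of natural numbers. -/
def asc (l : List ℕ) : ℕ :=
  ((List.range (l.length - 1)).filter (fun j => l.getD j 0 < l.getD (j + 1) 0)).length

/-- `x` is an ascent sequence: nonempty, starts with 0, and each later entry is
at most one more than the number of ascents of the preceding prefix. -/
def IsAscSeq (x : List ℕ) : Prop :=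
  x ≠ [] ∧ x.getD 0 0 = 0 ∧
    ∀ i, 1 ≤ i → i < x.length → x.getD i 0 ≤ 1 + asc (x.take i)

/-- `x` contains the pattern `p`: some subsequence of `x` is order-isomorphic
(including equalities) to `p`, i.e. its reduction equals `p`. -/
def Contains (p x : List ℕ) : Prop :=
  ∃ y : List ℕ, y.Sublist x ∧ y.length = p.length ∧
    ∀ i j, i < p.length → j < p.length →
      (y.getD i 0 < y.getD j 0 ↔ p.getD i 0 < p.getD j 0)

/-- `x` avoids the pattern `p`. -/
def Avoids (p x : List ℕ) : Prop := ¬ Contains p x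

namespace APaux

/-- ascent count of the first `n` values of `f`. -/
def A (f : ℕ → ℕ) (n : ℕ) : ℕ :=
  ((List.range (n - 1)).filter (fun j => f j < f (j + 1))).length

lemma asc_eq_A (x : List ℕ) : asc x = A (fun i => x.getD i 0) x.length := rfl

lemma getD_eq_get {x : List ℕ} {i : ℕ} (h : i < x.length) : x.getD i 0 = x[i] := by
  rw [List.getD_eq_getElem?_getD, List.getElem?_eq_getElem h]; rfl

lemma getD_eq_zero {x : List ℕ} {i : ℕ} (h : x.length ≤ i) : x.getD i 0 = 0 := by
  rw [List.getD_eq_getElem?_getD, List.getElem?_eq_none h]; rfl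

lemma getD_take (x : List ℕ) {i j : ℕ} (h : j < i) :
    (x.take i).getD j 0 = x.getD j 0 := by
  simp [List.getD_eq_getElem?_getD, List.getElem?_take, h]

lemma A_congr {f g : ℕ → ℕ} {i : ℕ} (h : ∀ j < i, f j = g j) : A f i = A g i := by
  unfold A
  congr 1
  apply List.filter_congr
  intro j hj
  rw [List.mem_range] at hj
  have h1 : j < i := lt_of_lt_of_le hj (Nat.sub_le _ _)
  have h2 : j + 1 < i := by omega
  rw [h j h1, h (j+1) h2]

lemma asc_take (x : List ℕ) {i : ℕ} (h : i ≤ x.length) :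
    asc (x.take i) = A (fun j => x.getD j 0) i := by
  rw [asc_eq_A]
  have hl : (x.take i).length = i := by simp [List.length_take]; omega
  rw [hl]
  exact A_congr (fun j hj => getD_take x hj)

lemma isAscSeq_iff (x : List ℕ) : IsAscSeq x ↔ 1 ≤ x.length ∧ x.getD 0 0 = 0 ∧
    ∀ i, 1 ≤ i → i < x.length → x.getD i 0 ≤ 1 + A (fun j => x.getD j 0) i := by
  unfold IsAscSeq
  have hne : x ≠ [] ↔ 1 ≤ x.length := by
    rw [← List.length_pos_iff]; rfl
  rw [hne]
  refine and_congr_right fun _ => and_congr_right fun _ => ?_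
  refine forall_congr' fun i => forall_congr' fun _ => forall_congr' fun hi => ?_
  rw [asc_take x (le_of_lt hi)]

lemma A_succ (f : ℕ → ℕ) (i : ℕ) :
    A f (i + 2) = A f (i + 1) + (if f i < f (i + 1) then 1 else 0) := by
  unfold A
  rw [show i + 2 - 1 = i + 1 from rfl, show i + 1 - 1 = i from rfl, List.range_succ,
    List.filter_append, List.length_append]
  by_cases h : f i < f (i + 1) <;> simp [h]

lemma A_pos {f : ℕ → ℕ} {i : ℕ} (h : 0 < A f i) : ∃ j, j + 1 < i ∧ f j < f (j + 1) := by
  unfold A at h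
  rw [List.length_pos_iff] at h
  obtain ⟨j, hj⟩ := List.exists_mem_of_ne_nil _ h
  rw [List.mem_filter, List.mem_range] at hj
  exact ⟨j, by omega, by simpa using hj.2⟩

/-- the list of the first n values of f -/
def seqOf (f : ℕ → ℕ) (n : ℕ) : List ℕ := (List.range n).map f

@[simp] lemma length_seqOf (f : ℕ → ℕ) (n : ℕ) : (seqOf f n).length = n := by simp [seqOf]

lemma getD_seqOf (f : ℕ → ℕ) {n i : ℕ} (h : i < n) : (seqOf f n).getD i 0 = f i := by
  have h' : i < (seqOf f n).length := by simpa using h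
  rw [List.getD_eq_getElem?_getD, List.getElem?_eq_getElem h']
  simp [seqOf]

lemma getD_seqOf_ge (f : ℕ → ℕ) {n i : ℕ} (h : n ≤ i) : (seqOf f n).getD i 0 = 0 := by
  apply getD_eq_zero
  simpa using h

lemma seqOf_getD (x : List ℕ) : seqOf (fun i => x.getD i 0) x.length = x := by
  apply List.ext_getElem (by simp)
  intro i h1 h2
  have : i < x.length := by simpa using h2
  rw [← getD_eq_get h1, getD_seqOf _ this, getD_eq_get this]


/-- the special (non-binary) avoiders, as a function of the index -/
def specFun (a b m s t : ℕ) (i : ℕ) : ℕ :=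
  if i ≤ a then 0
  else if i = a + 1 then 1
  else if i ≤ a + 1 + b then 0
  else if i ≤ a + 2 + b + m then i - (a + b)
  else if i ≤ a + 2 + b + m + s then m + 2
  else m + 1

/-- closed form for the ascent counts of `specFun` -/
def ascF (a b m s t i : ℕ) : ℕ :=
  if i ≤ a + 1 then 0
  else if i ≤ a + 2 + b then 1
  else if i ≤ a + 3 + b + m then i - (a + 1 + b)
  else m + 2

set_option maxHeartbeats 3200000 in
lemma A_specFun (a b m s t : ℕ) : ∀ i, A (specFun a b m s t) i = ascF a b m s t i := by
  have base0 : A (specFun a b m s t) 0 = 0 := rfl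
  have base1 : A (specFun a b m s t) 1 = 0 := rfl
  intro i
  induction i using Nat.strong_induction_on with
  | _ i ih =>
    match i with
    | 0 => rw [base0]; simp [ascF]
    | 1 => rw [base1]; simp [ascF]
    | (i + 2) =>
      rw [A_succ, ih (i + 1) (by omega)]
      simp only [specFun, ascF]
      split_ifs <;> omega

lemma isAscSeq_spec (a b m s t : ℕ) :
    IsAscSeq (seqOf (specFun a b m s t) (a + b + m + s + t + 3)) := by
  rw [isAscSeq_iff]
  refine ⟨by simp, ?_, ?_⟩
  · rw [getD_seqOf _ (by omega)]
    simp [specFun]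
  · intro i h1 hi
    rw [length_seqOf] at hi
    rw [getD_seqOf _ hi]
    have : A (fun j => (seqOf (specFun a b m s t) (a + b + m + s + t + 3)).getD j 0) i
        = A (specFun a b m s t) i :=
      A_congr (fun j hj => getD_seqOf _ (by omega))
    rw [this, A_specFun]
    simp only [specFun, ascF]
    split_ifs <;> omega

/-- binary sequences: index function from a bool word -/
def binFun (g : ℕ → Bool) (i : ℕ) : ℕ := if i = 0 then 0 else if g (i - 1) then 1 else 0

lemma binFun_le (g : ℕ → Bool) (i : ℕ) : binFun g i ≤ 1 := by
  unfold binFun; split_ifs <;> omega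

lemma isAscSeq_bin (g : ℕ → Bool) (n : ℕ) (hn : 1 ≤ n) : IsAscSeq (seqOf (binFun g) n) := by
  rw [isAscSeq_iff]
  refine ⟨by simpa, by rw [getD_seqOf _ (by omega)]; simp [binFun], ?_⟩
  intro i h1 hi
  rw [length_seqOf] at hi
  rw [getD_seqOf _ hi]
  calc binFun g i ≤ 1 := binFun_le g i
  _ ≤ 1 + A _ i := by omega

end APaux


namespace APaux

lemma contains_of_indices {p x : List ℕ} (hp : p.length = 4) {i j k l : ℕ}
    (hij : i < j) (hjk : j < k) (hkl : k < l) (hl : l < x.length)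
    (hpat : ∀ u v, u < 4 → v < 4 →
      ([x.getD i 0, x.getD j 0, x.getD k 0, x.getD l 0].getD u 0 <
        [x.getD i 0, x.getD j 0, x.getD k 0, x.getD l 0].getD v 0 ↔
        p.getD u 0 < p.getD v 0)) : Contains p x := by
  have hi : i < x.length := by omega
  have hj : j < x.length := by omega
  have hk : k < x.length := by omega
  refine ⟨[x.getD i 0, x.getD j 0, x.getD k 0, x.getD l 0], ?_, by simp [hp], ?_⟩
  · rw [List.sublist_iff_exists_fin_orderEmbedding_get_eq]
    have hmono : StrictMono (fun u : Fin 4 =>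
        (![⟨i, hi⟩, ⟨j, hj⟩, ⟨k, hk⟩, ⟨l, hl⟩] u : Fin x.length)) := by
      intro u v huv
      fin_cases u <;> fin_cases v <;>
        simp_all [Fin.lt_def] <;> omega
    refine ⟨OrderEmbedding.ofStrictMono _ hmono, ?_⟩
    intro ix
    fin_cases ix <;> simp [getD_eq_get, hi, hj, hk, hl] <;> try rfl
  · intro u v hu hv
    rw [hp] at hu hv
    exact hpat u v hu hv

lemma indices_of_contains {p x : List ℕ} (hp : p.length = 4) (h : Contains p x) :
    ∃ i j k l : ℕ, i < j ∧ j < k ∧ k < l ∧ l < x.length ∧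
      ∀ u v, u < 4 → v < 4 →
      ([x.getD i 0, x.getD j 0, x.getD k 0, x.getD l 0].getD u 0 <
        [x.getD i 0, x.getD j 0, x.getD k 0, x.getD l 0].getD v 0 ↔
        p.getD u 0 < p.getD v 0) := by
  obtain ⟨y, hsub, hlen, hpat⟩ := h
  rw [hp] at hlen hpat
  obtain ⟨F, hF⟩ := List.sublist_iff_exists_fin_orderEmbedding_get_eq.mp hsub
  have h0 : (0 : ℕ) < y.length := by omega
  have h1 : (1 : ℕ) < y.length := by omega
  have h2 : (2 : ℕ) < y.length := by omega
  have h3 : (3 : ℕ) < y.length := by omega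
  refine ⟨F ⟨0, h0⟩, F ⟨1, h1⟩, F ⟨2, h2⟩, F ⟨3, h3⟩,
    F.strictMono (by simp [Fin.lt_def]), F.strictMono (by simp [Fin.lt_def]),
    F.strictMono (by simp [Fin.lt_def]), (F ⟨3, h3⟩).isLt, ?_⟩
  have key : ∀ (u : ℕ) (hu : u < y.length),
      x.getD (F ⟨u, hu⟩) 0 = y.getD u 0 := by
    intro u hu
    rw [getD_eq_get (F ⟨u, hu⟩).isLt, getD_eq_get hu]
    simpa using (hF ⟨u, hu⟩).symm
  intro u v hu hv
  have hy : ∀ (u : ℕ) (hu : u < 4),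
      [x.getD (↑(F ⟨0, h0⟩)) 0, x.getD (↑(F ⟨1, h1⟩)) 0, x.getD (↑(F ⟨2, h2⟩)) 0,
        x.getD (↑(F ⟨3, h3⟩)) 0].getD u 0 = y.getD u 0 := by
    intro u hu
    interval_cases u <;>
      simp only [List.getD_cons_zero, List.getD_cons_succ] <;>
      [exact key 0 h0; exact key 1 h1; exact key 2 h2; exact key 3 h3]
  rw [hy u hu, hy v hv]
  exact hpat u v hu hv

lemma avoids0112_of {x : List ℕ}
    (H : ∀ i j k l, i < j → j < k → k < l → l < x.length →
      x.getD i 0 < x.getD j 0 → x.getD j 0 = x.getD k 0 → x.getD k 0 < x.getD l 0 → False) :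
    Avoids [0, 1, 1, 2] x := by
  intro hc
  obtain ⟨i, j, k, l, hij, hjk, hkl, hl, hpat⟩ := indices_of_contains (by simp) hc
  have h01 := hpat 0 1 (by omega) (by omega)
  have h12 := hpat 1 2 (by omega) (by omega)
  have h21 := hpat 2 1 (by omega) (by omega)
  have h23 := hpat 2 3 (by omega) (by omega)
  simp only [List.getD_cons_zero, List.getD_cons_succ] at h01 h12 h21 h23
  have r1 : x.getD i 0 < x.getD j 0 := h01.mpr (by norm_num)
  have r3 : x.getD k 0 < x.getD l 0 := h23.mpr (by norm_num)
  have n1 : ¬ x.getD j 0 < x.getD k 0 := fun hh => by have := h12.mp hh; norm_num at this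
  have n2 : ¬ x.getD k 0 < x.getD j 0 := fun hh => by have := h21.mp hh; norm_num at this
  exact H i j k l hij hjk hkl hl r1 (by omega) r3

lemma avoids0120_of {x : List ℕ}
    (H : ∀ i j k l, i < j → j < k → k < l → l < x.length →
      x.getD i 0 < x.getD j 0 → x.getD j 0 < x.getD k 0 → x.getD l 0 = x.getD i 0 → False) :
    Avoids [0, 1, 2, 0] x := by
  intro hc
  obtain ⟨i, j, k, l, hij, hjk, hkl, hl, hpat⟩ := indices_of_contains (by simp) hc
  have h01 := hpat 0 1 (by omega) (by omega)
  have h12 := hpat 1 2 (by omega) (by omega)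
  have h30 := hpat 3 0 (by omega) (by omega)
  have h03 := hpat 0 3 (by omega) (by omega)
  simp only [List.getD_cons_zero, List.getD_cons_succ] at h01 h12 h30 h03
  have r1 : x.getD i 0 < x.getD j 0 := h01.mpr (by norm_num)
  have r2 : x.getD j 0 < x.getD k 0 := h12.mpr (by norm_num)
  have n1 : ¬ x.getD l 0 < x.getD i 0 := fun hh => by have := h30.mp hh; norm_num at this
  have n2 : ¬ x.getD i 0 < x.getD l 0 := fun hh => by have := h03.mp hh; norm_num at this
  exact H i j k l hij hjk hkl hl r1 r2 (by omega)

lemma avoids0112_indices {x : List ℕ} (hav : Avoids [0, 1, 1, 2] x) :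
    ∀ i j k l, i < j → j < k → k < l → l < x.length →
      x.getD i 0 < x.getD j 0 → x.getD j 0 = x.getD k 0 → x.getD k 0 < x.getD l 0 → False := by
  intro i j k l hij hjk hkl hl r1 r2 r3
  refine hav (contains_of_indices (by simp) hij hjk hkl hl ?_)
  intro u v hu hv
  interval_cases u <;> interval_cases v <;>
    simp only [List.getD_cons_zero, List.getD_cons_succ] <;> omega

lemma avoids0120_indices {x : List ℕ} (hav : Avoids [0, 1, 2, 0] x) :
    ∀ i j k l, i < j → j < k → k < l → l < x.length →
      x.getD i 0 < x.getD j 0 → x.getD j 0 < x.getD k 0 → x.getD l 0 = x.getD i 0 → False := by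
  intro i j k l hij hjk hkl hl r1 r2 r3
  refine hav (contains_of_indices (by simp) hij hjk hkl hl ?_)
  intro u v hu hv
  interval_cases u <;> interval_cases v <;>
    simp only [List.getD_cons_zero, List.getD_cons_succ] <;> omega

end APaux


namespace APaux

lemma avoids_of_le_one {x : List ℕ} (hb : ∀ i, x.getD i 0 ≤ 1) :
    Avoids [0, 1, 1, 2] x ∧ Avoids [0, 1, 2, 0] x := by
  constructor
  · apply avoids0112_of
    intro i j k l _ _ _ _ r1 r2 r3
    have := hb i; have := hb j; have := hb k; have := hb l
    omega
  · apply avoids0120_of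
    intro i j k l _ _ _ _ r1 r2 r3
    have := hb i; have := hb j; have := hb k; have := hb l
    omega

lemma bin_getD_le (g : ℕ → Bool) (n : ℕ) (i : ℕ) : (seqOf (binFun g) n).getD i 0 ≤ 1 := by
  by_cases h : i < n
  · rw [getD_seqOf _ h]; exact binFun_le g i
  · rw [getD_eq_zero (by simpa using not_lt.mp h)]; omega

lemma specFun_cases (a b m s t u : ℕ) :
    (u ≤ a ∧ specFun a b m s t u = 0) ∨
    (u = a + 1 ∧ specFun a b m s t u = 1) ∨
    (a + 1 < u ∧ u ≤ a + 1 + b ∧ specFun a b m s t u = 0) ∨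
    (a + 1 + b < u ∧ u ≤ a + 2 + b + m ∧ specFun a b m s t u = u - (a + b)) ∨
    (a + 2 + b + m < u ∧ u ≤ a + 2 + b + m + s ∧ specFun a b m s t u = m + 2) ∨
    (a + 2 + b + m + s < u ∧ specFun a b m s t u = m + 1) := by
  unfold specFun
  split_ifs <;> omega

set_option maxHeartbeats 12000000 in
lemma avoids_spec_1 (a b m s t : ℕ) :
    Avoids [0, 1, 1, 2] (seqOf (specFun a b m s t) (a + b + m + s + t + 3)) := by
  apply avoids0112_of
  intro i j k l hij hjk hkl hl r1 r2 r3
  rw [length_seqOf] at hl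
  have hi : i < a + b + m + s + t + 3 := by omega
  have hj : j < a + b + m + s + t + 3 := by omega
  have hk : k < a + b + m + s + t + 3 := by omega
  rw [getD_seqOf _ hi, getD_seqOf _ hj] at r1
  rw [getD_seqOf _ hj, getD_seqOf _ hk] at r2
  rw [getD_seqOf _ hk, getD_seqOf _ hl] at r3
  rcases specFun_cases a b m s t i with ⟨h1,h2⟩|⟨h1,h2⟩|⟨h1,h1',h2⟩|⟨h1,h1',h2⟩|⟨h1,h1',h2⟩|⟨h1,h2⟩ <;>
    rcases specFun_cases a b m s t j with ⟨g1,g2⟩|⟨g1,g2⟩|⟨g1,g1',g2⟩|⟨g1,g1',g2⟩|⟨g1,g1',g2⟩|⟨g1,g2⟩ <;>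
    rcases specFun_cases a b m s t k with ⟨f1,f2⟩|⟨f1,f2⟩|⟨f1,f1',f2⟩|⟨f1,f1',f2⟩|⟨f1,f1',f2⟩|⟨f1,f2⟩ <;>
    rcases specFun_cases a b m s t l with ⟨e1,e2⟩|⟨e1,e2⟩|⟨e1,e1',e2⟩|⟨e1,e1',e2⟩|⟨e1,e1',e2⟩|⟨e1,e2⟩ <;>
    omega

set_option maxHeartbeats 12000000 in
lemma avoids_spec_2 (a b m s t : ℕ) :
    Avoids [0, 1, 2, 0] (seqOf (specFun a b m s t) (a + b + m + s + t + 3)) := by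
  apply avoids0120_of
  intro i j k l hij hjk hkl hl r1 r2 r3
  rw [length_seqOf] at hl
  have hi : i < a + b + m + s + t + 3 := by omega
  have hj : j < a + b + m + s + t + 3 := by omega
  have hk : k < a + b + m + s + t + 3 := by omega
  rw [getD_seqOf _ hi, getD_seqOf _ hj] at r1
  rw [getD_seqOf _ hj, getD_seqOf _ hk] at r2
  rw [getD_seqOf _ hl, getD_seqOf _ hi] at r3
  rcases specFun_cases a b m s t i with ⟨h1,h2⟩|⟨h1,h2⟩|⟨h1,h1',h2⟩|⟨h1,h1',h2⟩|⟨h1,h1',h2⟩|⟨h1,h2⟩ <;>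
    rcases specFun_cases a b m s t j with ⟨g1,g2⟩|⟨g1,g2⟩|⟨g1,g1',g2⟩|⟨g1,g1',g2⟩|⟨g1,g1',g2⟩|⟨g1,g2⟩ <;>
    rcases specFun_cases a b m s t k with ⟨f1,f2⟩|⟨f1,f2⟩|⟨f1,f1',f2⟩|⟨f1,f1',f2⟩|⟨f1,f1',f2⟩|⟨f1,f2⟩ <;>
    rcases specFun_cases a b m s t l with ⟨e1,e2⟩|⟨e1,e2⟩|⟨e1,e1',e2⟩|⟨e1,e1',e2⟩|⟨e1,e1',e2⟩|⟨e1,e2⟩ <;>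
    omega

end APaux


namespace APaux

lemma seqOf_congr {f g : ℕ → ℕ} {n : ℕ} (h : ∀ i < n, f i = g i) : seqOf f n = seqOf g n := by
  unfold seqOf
  apply List.map_congr_left
  intro i hi
  exact h i (List.mem_range.mp hi)

lemma two_of_one_lt_length {l : List ℕ} (hnd : l.Nodup) (h : 1 < l.length) :
    ∃ u v, u ∈ l ∧ v ∈ l ∧ u ≠ v := by
  match l, h with
  | a :: b :: r, _ =>
    refine ⟨a, b, by simp, by simp, ?_⟩
    intro hab
    rw [List.nodup_cons] at hnd
    exact hnd.1 (hab ▸ (List.mem_cons_self : b ∈ b :: r))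

lemma classify_fun (f : ℕ → ℕ) (n : ℕ) (hn1 : 1 ≤ n) (hf0 : f 0 = 0)
    (hout : ∀ i, n ≤ i → f i = 0)
    (hasc : ∀ i, 1 ≤ i → i < n → f i ≤ 1 + A f i)
    (H1 : ∀ i j k l, i < j → j < k → k < l → l < n →
      f i < f j → f j = f k → f k < f l → False)
    (H2 : ∀ i j k l, i < j → j < k → k < l → l < n →
      f i < f j → f j < f k → f l = f i → False)
    (hbig : ∃ i, 2 ≤ f i) :
    ∃ a b m s t, a + b + m + s + t + 3 = n ∧ ∀ i, i < n → f i = specFun a b m s t i := by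
  classical
  -- p : first index with value ≥ 2
  set p := Nat.find hbig with hpdef
  have hp2 : 2 ≤ f p := Nat.find_spec hbig
  have hpmin : ∀ q, q < p → f q ≤ 1 := by
    intro q hq
    have := Nat.find_min hbig hq
    omega
  have hpn : p < n := by
    by_contra h
    have := hout p (by omega)
    omega
  have hp1 : 1 ≤ p := by
    rcases Nat.eq_zero_or_pos p with h | h
    · rw [h] at hp2; omega
    · exact h
  -- at most one `1` before p
  have hone : ∀ q1 q2, q1 < q2 → q2 < p → f q1 = 1 → f q2 = 1 → False := by
    intro q1 q2 h12 h2p hv1 hv2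
    have hq1pos : 0 < q1 := by
      rcases Nat.eq_zero_or_pos q1 with h | h
      · rw [h] at hv1; omega
      · exact h
    exact H1 0 q1 q2 p hq1pos h12 h2p hpn (by omega) (by omega) (by omega)
  -- A f p ≤ 1
  have hApA : A f p ≤ 1 := by
    by_contra h
    have h' : 1 < ((List.range (p - 1)).filter (fun j => f j < f (j + 1))).length := by
      unfold A at h; omega
    obtain ⟨u, v, hu, hv, huv⟩ :=
      two_of_one_lt_length ((List.nodup_range).filter _) h'
    rw [List.mem_filter, List.mem_range] at hu hv
    have hu2 : f u < f (u + 1) := by simpa using hu.2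
    have hv2 : f v < f (v + 1) := by simpa using hv.2
    have hu1 : f (u + 1) = 1 := by
      have := hpmin (u + 1) (by omega); omega
    have hv1 : f (v + 1) = 1 := by
      have := hpmin (v + 1) (by omega); omega
    rcases lt_trichotomy u v with h'' | h'' | h''
    · exact hone (u + 1) (v + 1) (by omega) (by omega) hu1 hv1
    · exact huv h''
    · exact hone (v + 1) (u + 1) (by omega) (by omega) hv1 hu1
  have hfp : f p = 2 := by
    have := hasc p hp1 hpn
    omega
  -- the position c of the unique 1 before p
  have hApos : 0 < A f p := by
    have := hasc p hp1 hpn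
    omega
  obtain ⟨c0, hc0p, hc0⟩ := A_pos hApos
  set c := c0 + 1 with hcdef
  have hcp : c < p := by omega
  have hfc : f c = 1 := by
    have := hpmin c (by omega); omega
  have hc1 : 1 ≤ c := by omega
  have hzero : ∀ i, i < p → i ≠ c → f i = 0 := by
    intro i hip hic
    have hle := hpmin i hip
    rcases Nat.lt_or_ge (f i) 1 with h | h
    · omega
    · have hfi : f i = 1 := by omega
      rcases lt_trichotomy i c with hh | hh | hh
      · exact absurd (hone i c hh hcp hfi hfc) (by simp)
      · exact absurd hh hic
      · exact absurd (hone c i hh hip hfc hfi) (by simp)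
  set a := c - 1 with hadef
  set b := p - 1 - c with hbdef
  have hca : c = a + 1 := by omega
  have hpab : p = a + 2 + b := by omega
  -- the maximal increasing run starting at p
  have hQ : ∃ u, (p + u = n ∨ (p + u < n ∧ f (p + u) ≠ u + 2)) := ⟨n - p, Or.inl (by omega)⟩
  set k := Nat.find hQ with hkdef
  have hQk := Nat.find_spec hQ
  rw [← hkdef] at hQk
  have hkn : k ≤ n - p := Nat.find_min' hQ (Or.inl (by omega))
  have hrun : ∀ u, u < k → f (p + u) = u + 2 := by
    intro u hu
    have hh := Nat.find_min hQ hu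
    push_neg at hh
    exact hh.2 (by omega)
  have hk1 : 1 ≤ k := by
    rcases Nat.eq_zero_or_pos k with h | h
    · exfalso
      rw [h] at hQk
      simp only [Nat.add_zero] at hQk
      rcases hQk with hh | hh
      · omega
      · exact hh.2 (by omega)
    · exact h
  set m := k - 1 with hmdef
  set e := p + k with hedef
  have hen : e ≤ n := by omega
  -- pointwise description below e
  have hpre : ∀ s t i, i < e → f i = specFun a b m s t i := by
    intro s t i hie
    rcases Nat.lt_or_ge i p with hip | hip
    · by_cases hic : i = c
      · rw [hic, hfc]
        unfold specFun
        split_ifs <;> omega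
      · rw [hzero i hip hic]
        unfold specFun
        split_ifs <;> omega
    · have hu : i - p < k := by omega
      have hfi : f i = i - p + 2 := by
        have := hrun (i - p) hu
        rwa [show p + (i - p) = i by omega] at this
      rw [hfi]
      unfold specFun
      split_ifs <;> omega
  have hAe : ∀ i, i ≤ e → A f i = ascF a b m 0 0 i := by
    intro i hi
    have h1 : A f i = A (specFun a b m 0 0) i := A_congr fun j hj => hpre 0 0 j (by omega)
    rw [h1, A_specFun]
  -- no zeros after p
  have hnz : ∀ l, p < l → l < n → 1 ≤ f l := by
    intro l hpl hln
    by_contra hh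
    exact H2 0 c p l (by omega) hcp hpl hln (by omega) (by omega) (by omega)
  rcases hQk with he | ⟨hen', hfe⟩
  · -- e = n : no tail
    refine ⟨a, b, m, 0, 0, by omega, ?_⟩
    intro i hi
    exact hpre 0 0 i (by omega)
  · -- e < n : there is a tail
    have hfe_le : f e ≤ k + 1 := by
      have h1 := hasc e (by omega) hen'
      have h2 := hAe e (le_refl e)
      have h3 : ascF a b m 0 0 e = k + 1 := by
        unfold ascF; split_ifs <;> omega
      omega
    have hlow : ∀ l, e ≤ l → l < n → k ≤ f l := by
      intro l hel hln
      by_contra hh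
      push_neg at hh
      have h1 : 1 ≤ f l := hnz l (by omega) hln
      rcases Nat.lt_or_ge (f l) 2 with hv1 | hv2
      · -- f l = 1, so k ≥ 2
        have hk2 : 2 ≤ k := by omega
        have h3 : f (p + 1) = 3 := hrun 1 (by omega)
        exact H2 c p (p + 1) l hcp (by omega) (by omega) hln (by omega) (by omega) (by omega)
      · have r0 : f (p + (f l - 2)) = f l := by
          have := hrun (f l - 2) (by omega); omega
        have r1 : f (p + (f l - 1)) = f l + 1 := by
          have := hrun (f l - 1) (by omega); omega
        have r2 : f (p + f l) = f l + 2 := by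
          have := hrun (f l) (by omega); omega
        exact H2 (p + (f l - 2)) (p + (f l - 1)) (p + f l) l (by omega) (by omega)
          (by omega) hln (by omega) (by omega) (by omega)
    have htail : ∀ l (hel : e ≤ l), l < n → (f l ≤ k + 1 ∧ (e < l → f l ≤ f (l - 1))) := by
      intro l hel
      induction l, hel using Nat.le_induction with
      | base => exact fun _ => ⟨hfe_le, fun h' => absurd h' (lt_irrefl e)⟩
      | succ l hl ih =>
        intro hln
        have hln' : l < n := by omega
        obtain ⟨ih1, _⟩ := ih hln'
        have hfl_lb := hlow l hl hln'
        have hmain : f (l + 1) ≤ f l := by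
          by_contra hh
          push_neg at hh
          have hex : ∃ i0, 0 < i0 ∧ i0 < l ∧ f i0 = f l := by
            rcases Nat.lt_or_ge (f l) 2 with h2 | h2
            · exact ⟨c, by omega, by omega, by omega⟩
            · refine ⟨p + (f l - 2), by omega, by omega, ?_⟩
              have := hrun (f l - 2) (by omega)
              omega
          obtain ⟨i0, hi01, hi0l, hi0v⟩ := hex
          exact H1 0 i0 l (l + 1) hi01 hi0l (by omega) (by omega) (by omega) (by omega) (by omega)
        refine ⟨by omega, fun _ => ?_⟩
        rwa [show l + 1 - 1 = l by omega]
    -- e' : first tail index with value k (or n)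
    have hR : ∃ l, (l = n ∨ (e ≤ l ∧ l < n ∧ f l = k)) := ⟨n, Or.inl rfl⟩
    set e' := Nat.find hR with he'def
    have hRe' := Nat.find_spec hR
    have he'n : e' ≤ n := Nat.find_min' hR (Or.inl rfl)
    have he'e : e ≤ e' := by
      by_contra hh
      push_neg at hh
      rcases hRe' with h | h
      · omega
      · omega
    have hs_reg : ∀ l, e ≤ l → l < e' → f l = k + 1 := by
      intro l hel hle'
      have hnR := Nat.find_min hR hle'
      push_neg at hnR
      have hln : l < n := by omega
      have h1 := (htail l hel hln).1
      have h2 := hlow l hel hln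
      have h3 := hnR.2 hel hln
      omega
    have ht_reg : ∀ l (h : e' ≤ l), l < n → f l = k := by
      intro l hl
      induction l, hl using Nat.le_induction with
      | base =>
        intro hn'
        rcases hRe' with h | h
        · omega
        · exact h.2.2
      | succ l hl ih =>
        intro hln
        have h1 := ih (by omega)
        have h2 := (htail (l + 1) (by omega) hln).2 (by omega)
        have h3 := hlow (l + 1) (by omega) hln
        rw [show l + 1 - 1 = l by omega] at h2
        omega
    refine ⟨a, b, m, e' - e, n - e', by omega, ?_⟩
    intro i hi
    rcases Nat.lt_or_ge i e with h | h
    · exact hpre _ _ i h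
    · rcases Nat.lt_or_ge i e' with h2 | h2
      · rw [hs_reg i h h2]; unfold specFun; split_ifs <;> omega
      · rw [ht_reg i h2 hi]; unfold specFun; split_ifs <;> omega

end APaux


namespace APaux

def Tup (n : ℕ) : Type :=
  {q : ℕ × ℕ × ℕ × ℕ × ℕ // q.1 + (q.2.1 + (q.2.2.1 + (q.2.2.2.1 + q.2.2.2.2))) + 3 = n}

lemma sb_step {τ : Type} (g : τ → ℕ) (k : ℕ) (hfin : ∀ M, Finite {q : τ // g q = M})
    (hcard : ∀ M, Nat.card {q : τ // g q = M} = (M + k).choose k) :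
    (∀ M, Finite {q : ℕ × τ // q.1 + g q.2 = M}) ∧
    (∀ M, Nat.card {q : ℕ × τ // q.1 + g q.2 = M} = (M + k + 1).choose (k + 1)) := by
  have E : ∀ M, {q : ℕ × τ // q.1 + g q.2 = M} ≃ Σ i : Fin (M + 1), {q : τ // g q = M - i} :=
    fun M =>
    { toFun := fun q => ⟨⟨q.1.1, by have := q.2; omega⟩,
        ⟨q.1.2, show g q.1.2 = M - q.1.1 by have := q.2; omega⟩⟩
      invFun := fun r => ⟨(r.1.1, r.2.1),
        show r.1.1 + g r.2.1 = M by have h1 := r.2.2; have h2 := r.1.isLt; omega⟩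
      left_inv := fun q => rfl
      right_inv := fun r => rfl }
  have hfin' : ∀ M, Finite {q : ℕ × τ // q.1 + g q.2 = M} := by
    intro M
    haveI : ∀ i : Fin (M + 1), Finite {q : τ // g q = M - i} := fun i => hfin _
    exact Finite.of_equiv _ (E M).symm
  refine ⟨hfin', fun M => ?_⟩
  haveI : ∀ i : Fin (M + 1), Fintype {q : τ // g q = M - i} :=
    fun i => @Fintype.ofFinite _ (hfin _)
  rw [Nat.card_congr (E M), Nat.card_eq_fintype_card, Fintype.card_sigma]
  have hfib : ∀ i : Fin (M + 1), Fintype.card {q : τ // g q = M - i}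
      = ((M - i) + k).choose k := by
    intro i
    rw [← Nat.card_eq_fintype_card, hcard]
  rw [Finset.sum_congr rfl (fun i _ => hfib i)]
  rw [Fin.sum_univ_eq_sum_range (fun i => ((M - i) + k).choose k) (M + 1)]
  rw [← Nat.sum_range_add_choose M k, ← Finset.sum_range_reflect (fun j => (j + k).choose k) (M + 1)]
  apply Finset.sum_congr rfl
  intro i hi
  have h2 : M + 1 - 1 - i = M - i := by omega
  rw [h2]

lemma sb0 : (∀ M, Finite {q : ℕ // q = M}) ∧
    (∀ M, Nat.card {q : ℕ // q = M} = (M + 0).choose 0) := by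
  have E : ∀ M, {q : ℕ // q = M} ≃ Unit := fun M =>
    { toFun := fun _ => PUnit.unit
      invFun := fun _ => ⟨M, rfl⟩
      left_inv := fun q => by rcases q with ⟨q, rfl⟩; rfl
      right_inv := fun u => rfl }
  constructor
  · intro M; exact Finite.of_equiv _ (E M).symm
  · intro M
    rw [Nat.card_congr (E M)]
    simp

lemma sb4 : (∀ M, Finite {q : ℕ × ℕ × ℕ × ℕ × ℕ //
      q.1 + (q.2.1 + (q.2.2.1 + (q.2.2.2.1 + q.2.2.2.2))) = M}) ∧
    (∀ M, Nat.card {q : ℕ × ℕ × ℕ × ℕ × ℕ //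
      q.1 + (q.2.1 + (q.2.2.1 + (q.2.2.2.1 + q.2.2.2.2))) = M} = (M + 4).choose 4) := by
  obtain ⟨f0, c0⟩ := sb0
  obtain ⟨f1, c1⟩ := sb_step (fun q : ℕ => q) 0 f0 c0
  obtain ⟨f2, c2⟩ := sb_step (fun q : ℕ × ℕ => q.1 + q.2) 1 f1 c1
  obtain ⟨f3, c3⟩ := sb_step (fun q : ℕ × ℕ × ℕ => q.1 + (q.2.1 + q.2.2)) 2 f2 c2
  obtain ⟨f4, c4⟩ := sb_step
    (fun q : ℕ × ℕ × ℕ × ℕ => q.1 + (q.2.1 + (q.2.2.1 + q.2.2.2))) 3 f3 c3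
  exact ⟨f4, c4⟩

instance tup_finite (n : ℕ) : Finite (Tup n) := by
  rcases le_or_gt 3 n with h | h
  · haveI := sb4.1 (n - 3)
    exact Finite.of_equiv {q : ℕ × ℕ × ℕ × ℕ × ℕ //
        q.1 + (q.2.1 + (q.2.2.1 + (q.2.2.2.1 + q.2.2.2.2))) = n - 3}
      (Equiv.subtypeEquivRight (fun q => by constructor <;> intro hh <;> omega))
  · have : IsEmpty (Tup n) := ⟨fun q => by have := q.2; omega⟩
    infer_instance

lemma tup_card (n : ℕ) : Nat.card (Tup n) = (n + 1).choose 4 := by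
  rcases le_or_gt 3 n with h | h
  · have E : Tup n ≃ {q : ℕ × ℕ × ℕ × ℕ × ℕ //
        q.1 + (q.2.1 + (q.2.2.1 + (q.2.2.2.1 + q.2.2.2.2))) = n - 3} :=
      Equiv.subtypeEquivRight (fun q => by constructor <;> intro hh <;> omega)
    
    rw [Nat.card_congr E, sb4.2 (n - 3)]
    congr 1
    omega
  · have : IsEmpty (Tup n) := ⟨fun q => by have := q.2; omega⟩
    rw [Nat.card_of_isEmpty]
    rw [Nat.choose_eq_zero_of_lt (by omega)]

end APaux


namespace APaux

lemma getD_eq_get' {α : Type*} {x : List α} (d : α) {i : ℕ} (h : i < x.length) :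
    x.getD i d = x[i] := by
  rw [List.getD_eq_getElem?_getD, List.getElem?_eq_getElem h]; rfl

lemma getD_map_range {α : Type*} (g : ℕ → α) (d : α) {N j : ℕ} (h : j < N) :
    ((List.range N).map g).getD j d = g j := by
  rw [getD_eq_get' d (by simpa using h)]
  simp

lemma pointwise_of_seqOf_eq {f g : ℕ → ℕ} {n : ℕ} (h : seqOf f n = seqOf g n) :
    ∀ i < n, f i = g i := by
  intro i hi
  have h2 := congrArg (fun l => l.getD i 0) h
  rw [getD_seqOf f hi, getD_seqOf g hi] at h2
  exact h2

set_option maxHeartbeats 1600000 in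
lemma spec_param_eq {a b m s t a' b' m' s' t' n : ℕ}
    (h1 : a + b + m + s + t + 3 = n) (h2 : a' + b' + m' + s' + t' + 3 = n)
    (hEq : ∀ i, i < n → specFun a b m s t i = specFun a' b' m' s' t' i) :
    a = a' ∧ b = b' ∧ m = m' ∧ s = s' ∧ t = t' := by
  have ha : a = a' := by
    rcases lt_trichotomy a a' with h | h | h
    · have e := hEq (a + 1) (by omega)
      unfold specFun at e; split_ifs at e <;> omega
    · exact h
    · have e := hEq (a' + 1) (by omega)
      unfold specFun at e; split_ifs at e <;> omega
  subst ha
  have hb : b = b' := by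
    rcases lt_trichotomy b b' with h | h | h
    · have e := hEq (a + 2 + b) (by omega)
      unfold specFun at e; split_ifs at e <;> omega
    · exact h
    · have e := hEq (a + 2 + b') (by omega)
      unfold specFun at e; split_ifs at e <;> omega
  subst hb
  have hm : m = m' := by
    rcases lt_trichotomy m m' with h | h | h
    · have e := hEq (a + 2 + b + m + 1) (by omega)
      unfold specFun at e; split_ifs at e <;> omega
    · exact h
    · have e := hEq (a + 2 + b + m' + 1) (by omega)
      unfold specFun at e; split_ifs at e <;> omega
  subst hm
  have hs : s = s' := by
    rcases lt_trichotomy s s' with h | h | h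
    · have e := hEq (a + 2 + b + m + s + 1) (by omega)
      unfold specFun at e; split_ifs at e <;> omega
    · exact h
    · have e := hEq (a + 2 + b + m + s' + 1) (by omega)
      unfold specFun at e; split_ifs at e <;> omega
  subst hs
  exact ⟨rfl, rfl, rfl, rfl, by omega⟩

lemma classify_bin {x : List ℕ} (hsmall : ∀ i, x.getD i 0 ≤ 1) (h0 : x.getD 0 0 = 0) :
    x = seqOf (binFun (fun j => decide (x.getD (j + 1) 0 = 1))) x.length := by
  conv_lhs => rw [← seqOf_getD x]
  apply seqOf_congr
  intro i _
  unfold binFun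
  rcases Nat.eq_zero_or_pos i with h | h
  · subst h; simpa using h0
  · have hne : i ≠ 0 := by omega
    rw [if_neg hne]
    simp only [show i - 1 + 1 = i from by omega]
    have := hsmall i
    by_cases hv : x.getD i 0 = 1
    · rw [hv]; simp
    · rw [if_neg (by simpa using hv)]
      omega

lemma P_spec {a b m s t n : ℕ} (h : a + b + m + s + t + 3 = n) :
    (seqOf (specFun a b m s t) n).length = n ∧ IsAscSeq (seqOf (specFun a b m s t) n) ∧
      Avoids [0, 1, 1, 2] (seqOf (specFun a b m s t) n) ∧
      Avoids [0, 1, 2, 0] (seqOf (specFun a b m s t) n) := by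
  subst h
  exact ⟨by simp, isAscSeq_spec _ _ _ _ _, avoids_spec_1 _ _ _ _ _, avoids_spec_2 _ _ _ _ _⟩

/-- the binary avoider attached to a word of length `n-1` -/
def binOf (n : ℕ) (v : List.Vector Bool (n - 1)) : List ℕ :=
  seqOf (binFun (fun j => v.toList.getD j false)) n

lemma binOf_mk (n : ℕ) (l : List Bool) (hl : l.length = n - 1) :
    binOf n ⟨l, hl⟩ = seqOf (binFun (fun j => l.getD j false)) n := rfl

def G (n : ℕ) (hn : 1 ≤ n) : (List.Vector Bool (n - 1)) ⊕ (Tup n) →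
    {x : List ℕ // x.length = n ∧ IsAscSeq x ∧ Avoids [0, 1, 1, 2] x ∧ Avoids [0, 1, 2, 0] x}
  | Sum.inl v => ⟨binOf n v, by simp [binOf], isAscSeq_bin _ n hn,
      avoids_of_le_one (bin_getD_le _ n)⟩
  | Sum.inr q => ⟨seqOf (specFun q.1.1 q.1.2.1 q.1.2.2.1 q.1.2.2.2.1 q.1.2.2.2.2) n,
      P_spec (by have hq := q.2; omega)⟩

lemma G_injective (n : ℕ) (hn : 1 ≤ n) : Function.Injective (G n hn) := by
  intro u w huw
  have hval := congrArg Subtype.val huw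
  match u, w with
  | Sum.inl v, Sum.inl v' =>
    simp only [G, binOf] at hval
    have hpw := pointwise_of_seqOf_eq hval
    have hbits : ∀ j, j < n - 1 → v.toList.getD j false = v'.toList.getD j false := by
      intro j hj
      have hnum := hpw (j + 1) (by omega)
      unfold binFun at hnum
      simp only [Nat.add_sub_cancel, if_neg (show j + 1 ≠ 0 by omega)] at hnum
      cases hv : v.toList.getD j false <;> cases hv' : v'.toList.getD j false <;>
          rw [hv, hv'] at hnum
      all_goals first
        | rfl
        | exact absurd hnum (by simp)
    congr 1
    apply Subtype.ext
    apply List.ext_getElem (v.2.trans v'.2.symm)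
    intro j hj1 hj2
    have hj : j < n - 1 := by
      have h2 := v.2
      omega
    have hb := hbits j hj
    rw [show v.toList = v.1 from rfl, show v'.toList = v'.1 from rfl] at hb
    rw [getD_eq_get' false hj1, getD_eq_get' false hj2] at hb
    exact hb
  | Sum.inl v, Sum.inr q =>
    exfalso
    simp only [G, binOf] at hval
    have hpw := pointwise_of_seqOf_eq hval
    rcases q with ⟨⟨a, b, m, s, t⟩, hq⟩
    simp only at hpw hq
    have hp : a + 2 + b < n := by omega
    have := hpw (a + 2 + b) hp
    have h1 : binFun (fun j => v.toList.getD j false) (a + 2 + b) ≤ 1 := binFun_le _ _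
    have h2 : specFun a b m s t (a + 2 + b) = 2 := by
      unfold specFun; split_ifs <;> omega
    omega
  | Sum.inr q, Sum.inl v =>
    exfalso
    simp only [G, binOf] at hval
    have hpw := pointwise_of_seqOf_eq hval
    rcases q with ⟨⟨a, b, m, s, t⟩, hq⟩
    simp only at hpw hq
    have hp : a + 2 + b < n := by omega
    have := hpw (a + 2 + b) hp
    have h1 : binFun (fun j => v.toList.getD j false) (a + 2 + b) ≤ 1 := binFun_le _ _
    have h2 : specFun a b m s t (a + 2 + b) = 2 := by
      unfold specFun; split_ifs <;> omega
    omega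
  | Sum.inr q, Sum.inr q' =>
    simp only [G] at hval
    have hpw := pointwise_of_seqOf_eq hval
    rcases q with ⟨⟨a, b, m, s, t⟩, hq⟩
    rcases q' with ⟨⟨a', b', m', s', t'⟩, hq'⟩
    simp only at hpw hq hq'
    obtain ⟨e1, e2, e3, e4, e5⟩ := spec_param_eq (by omega) (by omega) hpw
    subst e1; subst e2; subst e3; subst e4; subst e5
    rfl

lemma G_surjective (n : ℕ) (hn : 1 ≤ n) : Function.Surjective (G n hn) := by
  rintro ⟨x, hlen, hAsc, hav1, hav2⟩
  by_cases hbig : ∃ i, 2 ≤ x.getD i 0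
  · -- the special case
    have hiff := (isAscSeq_iff x).mp hAsc
    obtain ⟨a, b, m, s, t, hsum, hpt⟩ := classify_fun (fun i => x.getD i 0) x.length
      hiff.1 hiff.2.1 (fun i hi => getD_eq_zero hi) hiff.2.2
      (fun i j k l h1 h2 h3 h4 h5 h6 h7 => avoids0112_indices hav1 i j k l h1 h2 h3 h4 h5 h6 h7)
      (fun i j k l h1 h2 h3 h4 h5 h6 h7 => avoids0120_indices hav2 i j k l h1 h2 h3 h4 h5 h6 h7)
      hbig
    refine ⟨Sum.inr ⟨(a, b, m, s, t), by simp only; omega⟩, ?_⟩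
    apply Subtype.ext
    simp only [G]
    conv_rhs => rw [← seqOf_getD x]
    rw [← hlen]
    exact (seqOf_congr hpt).symm
  · -- the binary case
    push_neg at hbig
    have hsmall : ∀ i, x.getD i 0 ≤ 1 := fun i => by have := hbig i; omega
    refine ⟨Sum.inl ⟨(List.range (n - 1)).map (fun j => decide (x.getD (j + 1) 0 = 1)),
      by simp⟩, ?_⟩
    apply Subtype.ext
    simp only [G, binOf_mk]
    have hx := classify_bin hsmall hAsc.2.1
    conv_rhs => rw [hx, hlen]
    apply seqOf_congr
    intro i hi
    unfold binFun
    rcases Nat.eq_zero_or_pos i with h | h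
    · simp [h]
    · have h0 : i ≠ 0 := by omega
      have hj : i - 1 < n - 1 := by omega
      simp only [getD_map_range (fun j => decide (x.getD (j + 1) 0 = 1)) false hj]

lemma vector_card (n : ℕ) : Nat.card (List.Vector Bool (n - 1)) = 2 ^ (n - 1) := by
  rw [Nat.card_eq_fintype_card, card_vector]
  simp

end APaux

theorem stmt_7 (n : ℕ) (hn : 1 ≤ n) :
    Nat.card {x : List ℕ // x.length = n ∧ IsAscSeq x ∧ Avoids [0, 1, 1, 2] x ∧ Avoids [0, 1, 2, 0] x} = 2 ^ (n - 1) + Nat.choose (n + 1) 4 := by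
  have hbij : Function.Bijective (APaux.G n hn) :=
    ⟨APaux.G_injective n hn, APaux.G_surjective n hn⟩
  rw [← Nat.card_congr (Equiv.ofBijective _ hbij), Nat.card_sum, APaux.vector_card,
    APaux.tup_card]
end

section
/- For n >= 2, the number of ascent sequences of length n avoiding the three patterns 0101, 0112, and 0120 equals (n^4 - 6n^3 + 47n^2 - 114n + 120)/24; for n = 1 it equals 1. -/
/- ### The two families -/

def typeI (a m p q : ℕ) : List ℕ :=
  List.replicate a 0 ++ List.range' 1 m ++ List.replicate p m ++ List.replicate q (m-1)

def typeII (a b m p q : ℕ) : List ℕ :=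
  List.replicate a 0 ++ [1] ++ List.replicate b 0 ++ List.range' 2 (m-1) ++
    List.replicate p m ++ List.replicate q (m-1)

def VI (a m p q : ℕ) (i : ℕ) : ℕ :=
  if i < a then 0 else if i < a+m then i-a+1 else if i < a+m+p then m
  else if i < a+m+p+q then m-1 else 0

def VII (a b m p q : ℕ) (i : ℕ) : ℕ :=
  if i < a then 0 else if i = a then 1 else if i < a+1+b then 0
  else if i < a+b+m then i-a-b+1 else if i < a+b+m+p then m
  else if i < a+b+m+p+q then m-1 else 0

lemma typeI_length (a m p q : ℕ) : (typeI a m p q).length = a+m+p+q := by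
  simp [typeI]; omega

lemma typeII_length (a b m p q : ℕ) (hm : 2 ≤ m) :
    (typeII a b m p q).length = a+b+m+p+q := by
  simp [typeII]; omega

lemma getD_replicate' {n i : ℕ} {v : ℕ} (h : i < n) :
    (List.replicate n v).getD i 0 = v := by
  rw [List.getD_eq_getElem _ _ (by simpa using h)]
  simp

lemma typeI_getD (a m p q : ℕ) (i : ℕ) :
    (typeI a m p q).getD i 0 = VI a m p q i := by
  unfold typeI VI
  simp only [List.append_assoc]
  rcases lt_or_ge i a with h | h
  · rw [List.getD_append _ _ _ _ (by simp; omega)]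
    rw [getD_replicate' h, if_pos h]
  rw [if_neg (by omega)]
  rw [List.getD_append_right _ _ _ _ (by simp; omega)]
  simp only [List.length_replicate]
  rcases lt_or_ge i (a+m) with h2 | h2
  · rw [List.getD_append _ _ _ _ (by simp; omega)]
    rw [List.getD_eq_getElem _ _ (by simp; omega)]
    rw [if_pos h2]
    simp [List.getElem_range']
    omega
  rw [if_neg (by omega)]
  rw [List.getD_append_right _ _ _ _ (by simp; omega)]
  simp only [List.length_range']
  rcases lt_or_ge i (a+m+p) with h3 | h3
  · rw [List.getD_append _ _ _ _ (by simp; omega)]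
    rw [getD_replicate' (by omega), if_pos h3]
  rw [if_neg (by omega)]
  rw [List.getD_append_right _ _ _ _ (by simp; omega)]
  simp only [List.length_replicate]
  rcases lt_or_ge i (a+m+p+q) with h4 | h4
  · rw [getD_replicate' (by omega), if_pos h4]
  rw [if_neg (by omega), List.getD_eq_default _ _ (by simp; omega)]

lemma typeII_getD (a b m p q : ℕ) (hm : 2 ≤ m) (i : ℕ) :
    (typeII a b m p q).getD i 0 = VII a b m p q i := by
  unfold typeII VII
  simp only [List.append_assoc, List.cons_append, List.nil_append, List.singleton_append]
  rcases lt_or_ge i a with h | h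
  · rw [List.getD_append _ _ _ _ (by simp; omega)]
    rw [getD_replicate' h, if_pos h]
  rw [if_neg (by omega)]
  rw [List.getD_append_right _ _ _ _ (by simp; omega)]
  simp only [List.length_replicate]
  rcases eq_or_ne i a with h1 | h1
  · subst h1
    simp
  rw [if_neg (by omega)]
  have hia : a + 1 ≤ i := by omega
  rw [show i - a = (i - a - 1) + 1 by omega, List.getD_cons_succ]
  rcases lt_or_ge i (a+1+b) with h2 | h2
  · rw [List.getD_append _ _ _ _ (by simp; omega)]
    rw [getD_replicate' (by omega), if_pos h2]
  rw [if_neg (by omega)]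
  rw [List.getD_append_right _ _ _ _ (by simp; omega)]
  simp only [List.length_replicate]
  rcases lt_or_ge i (a+b+m) with h3 | h3
  · rw [List.getD_append _ _ _ _ (by simp; omega)]
    rw [List.getD_eq_getElem _ _ (by simp; omega)]
    rw [if_pos h3]
    simp [List.getElem_range']
    omega
  rw [if_neg (by omega)]
  rw [List.getD_append_right _ _ _ _ (by simp; omega)]
  simp only [List.length_range']
  rcases lt_or_ge i (a+b+m+p) with h4 | h4
  · rw [List.getD_append _ _ _ _ (by simp; omega)]
    rw [getD_replicate' (by omega), if_pos h4]
  rw [if_neg (by omega)]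
  rw [List.getD_append_right _ _ _ _ (by simp; omega)]
  simp only [List.length_replicate]
  rcases lt_or_ge i (a+b+m+p+q) with h5 | h5
  · rw [getD_replicate' (by omega), if_pos h5]
  rw [if_neg (by omega), List.getD_eq_default _ _ (by simp; omega)]
lemma asc_append_singleton (l : List ℕ) (hl : l ≠ []) (v : ℕ) :
    asc (l ++ [v]) = asc l + (if l.getD (l.length - 1) 0 < v then 1 else 0) := by
  have hL : 1 ≤ l.length := List.length_pos_iff.2 hl
  unfold asc
  have hlen : (l ++ [v]).length - 1 = l.length := by simp
  rw [hlen]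
  have hr : List.range l.length = List.range (l.length - 1) ++ [l.length - 1] := by
    conv_lhs => rw [show l.length = (l.length - 1) + 1 by omega]
    exact List.range_succ
  rw [hr, List.filter_append, List.length_append]
  congr 1
  · rw [List.filter_congr]
    intro j hj
    simp only [List.mem_range] at hj
    rw [List.getD_append _ _ _ _ (by omega), List.getD_append _ _ _ _ (by omega)]
  · simp only [List.filter_cons, List.filter_nil]
    rw [List.getD_append _ _ _ _ (by omega), show l.length - 1 + 1 = l.length by omega,
      List.getD_append_right _ _ _ _ (by omega), Nat.sub_self, List.getD_cons_zero]
    split_ifs <;> simp_all [List.getD] <;> (rename_i h1 h2; have := of_decide_eq_true h1; omega)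

lemma isAscSeq_append (l : List ℕ) (hl : l ≠ []) (v : ℕ) :
    IsAscSeq (l ++ [v]) ↔ IsAscSeq l ∧ v ≤ 1 + asc l := by
  have hL : 1 ≤ l.length := List.length_pos_iff.2 hl
  constructor
  · rintro ⟨-, h0, h⟩
    rw [List.getD_append _ _ _ _ (by omega)] at h0
    refine ⟨⟨hl, h0, fun i hi1 hi2 => ?_⟩, ?_⟩
    · have := h i hi1 (by simp; omega)
      rwa [List.getD_append _ _ _ _ (by omega),
        List.take_append_of_le_length (by omega)] at this
    · have := h l.length hL (by simp)
      rwa [List.getD_append_right _ _ _ _ (by omega), Nat.sub_self,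
        List.getD_cons_zero, List.take_left] at this
  · rintro ⟨⟨-, h0, h⟩, hv⟩
    refine ⟨by simp, ?_, fun i hi1 hi2 => ?_⟩
    · rwa [List.getD_append _ _ _ _ (by omega)]
    · simp only [List.length_append, List.length_cons, List.length_nil] at hi2
      rcases lt_or_ge i l.length with hlt | hge
      · rw [List.getD_append _ _ _ _ (by omega),
          List.take_append_of_le_length (by omega)]
        exact h i hi1 hlt
      · have hi : i = l.length := by omega
        rw [hi, List.getD_append_right _ _ _ _ (by omega), Nat.sub_self,
          List.getD_cons_zero, List.take_left]
        exact hv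

lemma asc_replicate (a v : ℕ) : asc (List.replicate a v) = 0 := by
  induction a with
  | zero => rfl
  | succ k ih =>
    rcases Nat.eq_zero_or_pos k with hk | hk
    · subst hk; rfl
    · rw [List.replicate_succ', asc_append_singleton _ (by simp; omega),
        getD_replicate' (by simp; omega), ih]
      simp

lemma isAscSeq_replicate (a : ℕ) (ha : 1 ≤ a) : IsAscSeq (List.replicate a 0) := by
  refine ⟨by simp; omega, ?_, fun i hi1 hi2 => ?_⟩
  · rw [getD_replicate' (by omega)]
  · simp only [List.length_replicate] at hi2
    rw [getD_replicate' (by omega)]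
    omega

lemma typeI_ne_nil (a m p q : ℕ) (ha : 1 ≤ a) : typeI a m p q ≠ [] := by
  intro h
  have := typeI_length a m p q
  rw [h] at this
  simp at this
  omega

lemma typeI_zero (a : ℕ) : typeI a 0 0 0 = List.replicate a 0 := by simp [typeI]

lemma typeI_succ_m (a k : ℕ) : typeI a (k+1) 0 0 = typeI a k 0 0 ++ [k+1] := by
  have h := List.range'_concat (step := 1) (s := 1) (n := k)
  norm_num at h
  simp [typeI, h, Nat.add_comm]

lemma typeI_succ_p (a m p q : ℕ) : typeI a m (p+1) q = typeI a m p 0 ++ [m] ++ List.replicate q (m-1) := by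
  simp [typeI, List.replicate_succ' (n := p) (a := m)]

lemma typeI_succ_q (a m p q : ℕ) : typeI a m p (q+1) = typeI a m p q ++ [m-1] := by
  simp [typeI, List.replicate_succ' (n := q) (a := m-1)]

lemma typeI_last (a m p q : ℕ) (ha : 1 ≤ a) :
    (typeI a m p q).getD (a+m+p+q-1) 0 = if 1 ≤ q then m - 1 else if 1 ≤ p then m else if 1 ≤ m then m else 0 := by
  rw [typeI_getD]
  unfold VI
  split_ifs <;> omega

lemma asc_typeI0 (a m : ℕ) (ha : 1 ≤ a) : asc (typeI a m 0 0) = m := by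
  induction m with
  | zero => rw [typeI_zero, asc_replicate]
  | succ k ih =>
    rw [typeI_succ_m, asc_append_singleton _ (typeI_ne_nil a k 0 0 ha), ih]
    rw [typeI_length]
    rw [show a + k + 0 + 0 - 1 = a + k + 0 + 0 - 1 from rfl, typeI_last a k 0 0 ha]
    split_ifs <;> omega

lemma asc_typeIp (a m p : ℕ) (ha : 1 ≤ a) : asc (typeI a m p 0) = m := by
  induction p with
  | zero => exact asc_typeI0 a m ha
  | succ k ih =>
    have h : typeI a m (k+1) 0 = typeI a m k 0 ++ [m] := by
      rw [typeI_succ_p]; simp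
    rw [h, asc_append_singleton _ (typeI_ne_nil a m k 0 ha), ih, typeI_length,
      typeI_last a m k 0 ha]
    split_ifs <;> omega

lemma asc_typeI (a m p q : ℕ) (ha : 1 ≤ a) : asc (typeI a m p q) = m := by
  induction q with
  | zero => exact asc_typeIp a m p ha
  | succ k ih =>
    rw [typeI_succ_q, asc_append_singleton _ (typeI_ne_nil a m p k ha), ih, typeI_length,
      typeI_last a m p k ha]
    split_ifs <;> omega

lemma isAscSeq_typeI (a m p q : ℕ) (ha : 1 ≤ a) : IsAscSeq (typeI a m p q) := by
  induction q with
  | zero =>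
    induction p with
    | zero =>
      induction m with
      | zero => rw [typeI_zero]; exact isAscSeq_replicate a ha
      | succ k ihm =>
        rw [typeI_succ_m, isAscSeq_append _ (typeI_ne_nil a k 0 0 ha)]
        exact ⟨ihm, by rw [asc_typeI a k 0 0 ha]; omega⟩
    | succ k ihp =>
      have h : typeI a m (k+1) 0 = typeI a m k 0 ++ [m] := by rw [typeI_succ_p]; simp
      rw [h, isAscSeq_append _ (typeI_ne_nil a m k 0 ha)]
      exact ⟨ihp, by rw [asc_typeI a m k 0 ha]; omega⟩
  | succ k ihq =>
    rw [typeI_succ_q, isAscSeq_append _ (typeI_ne_nil a m p k ha)]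
    exact ⟨ihq, by rw [asc_typeI a m p k ha]; omega⟩
lemma typeII_ne_nil (a b m p q : ℕ) (ha : 1 ≤ a) : typeII a b m p q ≠ [] := by
  simp [typeII]

lemma typeII_base (a b : ℕ) : typeII a b 2 0 0 = typeI a 1 0 b ++ [2] := by
  simp [typeII, typeI, List.range']

lemma typeII_succ_m (a b m : ℕ) (hm : 1 ≤ m) :
    typeII a b (m+1) 0 0 = typeII a b m 0 0 ++ [m+1] := by
  have h : List.range' 2 (m+1-1) = List.range' 2 (m-1) ++ [m+1] := by
    have h2 := List.range'_concat (step := 1) (s := 2) (n := m-1)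
    rw [show (m-1)+1 = m+1-1 by omega] at h2
    rw [h2, show 2 + 1 * (m-1) = m+1 by omega]
  rw [show m+1-1 = m by omega] at h
  simp [typeII, h]

lemma typeII_succ_p (a b m p : ℕ) : typeII a b m (p+1) 0 = typeII a b m p 0 ++ [m] := by
  simp [typeII, List.replicate_succ' (n := p) (a := m)]

lemma typeII_succ_q (a b m p q : ℕ) : typeII a b m p (q+1) = typeII a b m p q ++ [m-1] := by
  simp [typeII, List.replicate_succ' (n := q) (a := m-1)]

lemma typeII_last (a b m p q : ℕ) (hm : 2 ≤ m) :
    (typeII a b m p q).getD (a+b+m+p+q-1) 0 = if 1 ≤ q then m - 1 else m := by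
  rw [typeII_getD a b m p q hm]
  unfold VII
  split_ifs <;> omega

lemma asc_typeII (a b m p q : ℕ) (ha : 1 ≤ a) (hm : 2 ≤ m) :
    asc (typeII a b m p q) = m := by
  have base : ∀ m', 2 ≤ m' → asc (typeII a b m' 0 0) = m' := by
    intro m' hm'
    induction m', hm' using Nat.le_induction with
    | base =>
      rw [typeII_base, asc_append_singleton _ (typeI_ne_nil a 1 0 b ha),
        asc_typeI a 1 0 b ha, typeI_length, typeI_last a 1 0 b ha]
      split_ifs <;> omega
    | succ k hk ih =>
      rw [typeII_succ_m a b k (by omega), asc_append_singleton _ (typeII_ne_nil a b k 0 0 ha),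
        ih, typeII_length a b k 0 0 (by omega), typeII_last a b k 0 0 (by omega)]
      split_ifs <;> omega
  have hp : ∀ p', asc (typeII a b m p' 0) = m := by
    intro p'
    induction p' with
    | zero => exact base m hm
    | succ k ih =>
      rw [typeII_succ_p, asc_append_singleton _ (typeII_ne_nil a b m k 0 ha), ih,
        typeII_length a b m k 0 hm, typeII_last a b m k 0 hm]
      split_ifs <;> omega
  induction q with
  | zero => exact hp p
  | succ k ih =>
    rw [typeII_succ_q, asc_append_singleton _ (typeII_ne_nil a b m p k ha), ih,
      typeII_length a b m p k hm, typeII_last a b m p k hm]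
    split_ifs <;> omega

lemma isAscSeq_typeII (a b m p q : ℕ) (ha : 1 ≤ a) (hm : 2 ≤ m) :
    IsAscSeq (typeII a b m p q) := by
  have base : ∀ m', 2 ≤ m' → IsAscSeq (typeII a b m' 0 0) := by
    intro m' hm'
    induction m', hm' using Nat.le_induction with
    | base =>
      rw [typeII_base, isAscSeq_append _ (typeI_ne_nil a 1 0 b ha)]
      exact ⟨isAscSeq_typeI a 1 0 b ha, by rw [asc_typeI a 1 0 b ha]⟩
    | succ k hk ih =>
      rw [typeII_succ_m a b k (by omega), isAscSeq_append _ (typeII_ne_nil a b k 0 0 ha)]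
      exact ⟨ih, by rw [asc_typeII a b k 0 0 ha (by omega)]; omega⟩
  have hp : ∀ p', IsAscSeq (typeII a b m p' 0) := by
    intro p'
    induction p' with
    | zero => exact base m hm
    | succ k ih =>
      rw [typeII_succ_p, isAscSeq_append _ (typeII_ne_nil a b m k 0 ha)]
      exact ⟨ih, by rw [asc_typeII a b m k 0 ha hm]; omega⟩
  induction q with
  | zero => exact hp p
  | succ k ih =>
    rw [typeII_succ_q, isAscSeq_append _ (typeII_ne_nil a b m p k ha)]
    exact ⟨ih, by rw [asc_typeII a b m p k ha hm]; omega⟩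
/- ### Pattern containment infrastructure -/

lemma sorted_sublist {l₁ l₂ : List ℕ} (h₁ : l₁.Pairwise (·<·)) (h₂ : l₂.Pairwise (·<·))
    (hsub : l₁ ⊆ l₂) : List.Sublist l₁ l₂ :=
  List.sublist_of_subperm_of_pairwise (h₁.nodup.subperm hsub) h₁ h₂

lemma sorted_range' (s k : ℕ) : (List.range' s k).Pairwise (·<·) := by
  exact List.pairwise_lt_range' (s := s) (n := k) 1 (by omega)

lemma sublist2_range' {u v s k : ℕ} (h1 : u < v) (h3 : s ≤ u) (h4 : v < s + k) :
    List.Sublist [u, v] (List.range' s k) := by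
  refine sorted_sublist (by simp [h1]) (sorted_range' s k) ?_
  intro z hz
  simp only [List.mem_cons, List.not_mem_nil, or_false] at hz
  rw [List.mem_range'_1]
  rcases hz with h | h <;> omega

lemma sublist3_range' {u v w s k : ℕ} (h1 : u < v) (h2 : v < w) (h3 : s ≤ u) (h4 : w < s + k) :
    List.Sublist [u, v, w] (List.range' s k) := by
  refine sorted_sublist (by simp [h1, h2]; omega) (sorted_range' s k) ?_
  intro z hz
  simp only [List.mem_cons, List.not_mem_nil, or_false] at hz
  rw [List.mem_range'_1]
  rcases hz with h | h | h <;> omega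

lemma contains_elim {p x : List ℕ} (hp : p.length = 4) (h : Contains p x) :
    ∃ g : Fin 4 → ℕ, StrictMono g ∧ (∀ k, g k < x.length) ∧
      ∀ s t : Fin 4, (x.getD (g s) 0 < x.getD (g t) 0 ↔ p.getD (s : ℕ) 0 < p.getD (t : ℕ) 0) := by
  obtain ⟨y, hsub, hlen, hrel⟩ := h
  rw [List.sublist_iff_exists_fin_orderEmbedding_get_eq] at hsub
  obtain ⟨f, hf⟩ := hsub
  have hy4 : y.length = 4 := by rw [hlen, hp]
  refine ⟨fun k => (f (Fin.cast hy4.symm k)).val, ?_, fun k => (f _).isLt, fun s t => ?_⟩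
  · intro s t hst
    apply f.strictMono
    rw [Fin.lt_def] at hst ⊢
    simpa [Fin.coe_cast] using hst
  · have hgety : ∀ k : Fin 4, x.getD ((f (Fin.cast hy4.symm k)).val) 0 = y.getD (k : ℕ) 0 := by
      intro k
      rw [List.getD_eq_getElem _ _ (f _).isLt, List.getD_eq_getElem _ _ (by omega)]
      have := hf (Fin.cast hy4.symm k)
      simp only [List.get_eq_getElem] at this
      rw [← this]
      simp [Fin.coe_cast]
    rw [hgety s, hgety t]
    exact hrel s t (by rw [hp]; omega) (by rw [hp]; omega)

lemma elim0101 {x : List ℕ} (h : Contains [0,1,0,1] x) :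
    ∃ i1 i2 i3 i4, i1 < i2 ∧ i2 < i3 ∧ i3 < i4 ∧ i4 < x.length ∧
      x.getD i1 0 = x.getD i3 0 ∧ x.getD i1 0 < x.getD i2 0 ∧ x.getD i2 0 = x.getD i4 0 := by
  obtain ⟨g, hmono, hlt, hrel⟩ := contains_elim (by rfl) h
  refine ⟨g 0, g 1, g 2, g 3, hmono (by decide), hmono (by decide), hmono (by decide), hlt 3,
    ?_, ?_, ?_⟩
  · have h1 := hrel ⟨0, by omega⟩ ⟨2, by omega⟩; have h2 := hrel ⟨2, by omega⟩ ⟨0, by omega⟩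
    simp [List.getD] at h1 h2 ⊢
    omega
  · have h1 := hrel ⟨0, by omega⟩ ⟨1, by omega⟩
    simp [List.getD] at h1 ⊢
    omega
  · have h1 := hrel ⟨1, by omega⟩ ⟨3, by omega⟩; have h2 := hrel ⟨3, by omega⟩ ⟨1, by omega⟩
    simp [List.getD] at h1 h2 ⊢
    omega

lemma elim0112 {x : List ℕ} (h : Contains [0,1,1,2] x) :
    ∃ i1 i2 i3 i4, i1 < i2 ∧ i2 < i3 ∧ i3 < i4 ∧ i4 < x.length ∧
      x.getD i1 0 < x.getD i2 0 ∧ x.getD i2 0 = x.getD i3 0 ∧ x.getD i3 0 < x.getD i4 0 := by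
  obtain ⟨g, hmono, hlt, hrel⟩ := contains_elim (by rfl) h
  refine ⟨g 0, g 1, g 2, g 3, hmono (by decide), hmono (by decide), hmono (by decide), hlt 3,
    ?_, ?_, ?_⟩
  · have h1 := hrel ⟨0, by omega⟩ ⟨1, by omega⟩
    simp [List.getD] at h1 ⊢
    omega
  · have h1 := hrel ⟨1, by omega⟩ ⟨2, by omega⟩; have h2 := hrel ⟨2, by omega⟩ ⟨1, by omega⟩
    simp [List.getD] at h1 h2 ⊢
    omega
  · have h1 := hrel ⟨2, by omega⟩ ⟨3, by omega⟩
    simp [List.getD] at h1 ⊢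
    omega

lemma elim0120 {x : List ℕ} (h : Contains [0,1,2,0] x) :
    ∃ i1 i2 i3 i4, i1 < i2 ∧ i2 < i3 ∧ i3 < i4 ∧ i4 < x.length ∧
      x.getD i1 0 = x.getD i4 0 ∧ x.getD i1 0 < x.getD i2 0 ∧ x.getD i2 0 < x.getD i3 0 := by
  obtain ⟨g, hmono, hlt, hrel⟩ := contains_elim (by rfl) h
  refine ⟨g 0, g 1, g 2, g 3, hmono (by decide), hmono (by decide), hmono (by decide), hlt 3,
    ?_, ?_, ?_⟩
  · have h1 := hrel ⟨0, by omega⟩ ⟨3, by omega⟩; have h2 := hrel ⟨3, by omega⟩ ⟨0, by omega⟩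
    simp [List.getD] at h1 h2 ⊢
    omega
  · have h1 := hrel ⟨0, by omega⟩ ⟨1, by omega⟩
    simp [List.getD] at h1 ⊢
    omega
  · have h1 := hrel ⟨1, by omega⟩ ⟨2, by omega⟩
    simp [List.getD] at h1 ⊢
    omega

lemma intro0101 {x : List ℕ} {w0 w1 w2 w3 : ℕ} (h : List.Sublist [w0,w1,w2,w3] x)
    (e1 : w0 = w2) (e2 : w0 < w1) (e3 : w1 = w3) : Contains [0,1,0,1] x := by
  refine ⟨[w0,w1,w2,w3], h, rfl, fun i j hi hj => ?_⟩
  simp only [List.length_cons, List.length_nil] at hi hj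
  interval_cases i <;> interval_cases j <;> simp [List.getD] <;> omega

lemma intro0112 {x : List ℕ} {w0 w1 w2 w3 : ℕ} (h : List.Sublist [w0,w1,w2,w3] x)
    (e1 : w0 < w1) (e2 : w1 = w2) (e3 : w2 < w3) : Contains [0,1,1,2] x := by
  refine ⟨[w0,w1,w2,w3], h, rfl, fun i j hi hj => ?_⟩
  simp only [List.length_cons, List.length_nil] at hi hj
  interval_cases i <;> interval_cases j <;> simp [List.getD] <;> omega

lemma intro0120 {x : List ℕ} {w0 w1 w2 w3 : ℕ} (h : List.Sublist [w0,w1,w2,w3] x)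
    (e1 : w0 < w1) (e2 : w1 < w2) (e3 : w3 = w0) : Contains [0,1,2,0] x := by
  refine ⟨[w0,w1,w2,w3], h, rfl, fun i j hi hj => ?_⟩
  simp only [List.length_cons, List.length_nil] at hi hj
  interval_cases i <;> interval_cases j <;> simp [List.getD] <;> omega
/- ### The families avoid the three patterns -/

lemma VI_spec (a m p q i : ℕ) :
    (i < a → VI a m p q i = 0) ∧ (a ≤ i → i < a+m → VI a m p q i = i-a+1) ∧
    (a+m ≤ i → i < a+m+p → VI a m p q i = m) ∧
    (a+m+p ≤ i → i < a+m+p+q → VI a m p q i = m-1) := by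
  unfold VI; split_ifs <;> omega

lemma VII_spec (a b m p q i : ℕ) (hm : 2 ≤ m) :
    (i < a → VII a b m p q i = 0) ∧ (i = a → VII a b m p q i = 1) ∧
    (a < i → i < a+1+b → VII a b m p q i = 0) ∧
    (a+1+b ≤ i → i < a+b+m → VII a b m p q i = i-a-b+1) ∧
    (a+b+m ≤ i → i < a+b+m+p → VII a b m p q i = m) ∧
    (a+b+m+p ≤ i → i < a+b+m+p+q → VII a b m p q i = m-1) := by
  unfold VII; split_ifs <;> omega

lemma avoids0101_typeI (a m p q : ℕ) : Avoids [0,1,0,1] (typeI a m p q) := by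
  intro h
  obtain ⟨i1,i2,i3,i4,h12,h23,h34,h4,e1,e2,e3⟩ := elim0101 h
  rw [typeI_length] at h4
  simp only [typeI_getD] at e1 e2 e3
  have s1 := VI_spec a m p q i1
  have s2 := VI_spec a m p q i2
  have s3 := VI_spec a m p q i3
  have s4 := VI_spec a m p q i4
  omega

lemma avoids0112_typeI (a m p q : ℕ) : Avoids [0,1,1,2] (typeI a m p q) := by
  intro h
  obtain ⟨i1,i2,i3,i4,h12,h23,h34,h4,e1,e2,e3⟩ := elim0112 h
  rw [typeI_length] at h4
  simp only [typeI_getD] at e1 e2 e3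
  have s1 := VI_spec a m p q i1
  have s2 := VI_spec a m p q i2
  have s3 := VI_spec a m p q i3
  have s4 := VI_spec a m p q i4
  omega

lemma avoids0120_typeI (a m p q : ℕ) : Avoids [0,1,2,0] (typeI a m p q) := by
  intro h
  obtain ⟨i1,i2,i3,i4,h12,h23,h34,h4,e1,e2,e3⟩ := elim0120 h
  rw [typeI_length] at h4
  simp only [typeI_getD] at e1 e2 e3
  have s1 := VI_spec a m p q i1
  have s2 := VI_spec a m p q i2
  have s3 := VI_spec a m p q i3
  have s4 := VI_spec a m p q i4
  omega

lemma avoids0101_typeII (a b m p q : ℕ) (hm : 2 ≤ m) (hq : 1 ≤ q → 3 ≤ m) :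
    Avoids [0,1,0,1] (typeII a b m p q) := by
  intro h
  obtain ⟨i1,i2,i3,i4,h12,h23,h34,h4,e1,e2,e3⟩ := elim0101 h
  rw [typeII_length a b m p q hm] at h4
  simp only [typeII_getD a b m p q hm] at e1 e2 e3
  have s1 := VII_spec a b m p q i1 hm
  have s2 := VII_spec a b m p q i2 hm
  have s3 := VII_spec a b m p q i3 hm
  have s4 := VII_spec a b m p q i4 hm
  omega

lemma avoids0112_typeII (a b m p q : ℕ) (hm : 2 ≤ m) :
    Avoids [0,1,1,2] (typeII a b m p q) := by
  intro h
  obtain ⟨i1,i2,i3,i4,h12,h23,h34,h4,e1,e2,e3⟩ := elim0112 h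
  rw [typeII_length a b m p q hm] at h4
  simp only [typeII_getD a b m p q hm] at e1 e2 e3
  have s1 := VII_spec a b m p q i1 hm
  have s2 := VII_spec a b m p q i2 hm
  have s3 := VII_spec a b m p q i3 hm
  have s4 := VII_spec a b m p q i4 hm
  omega

lemma avoids0120_typeII (a b m p q : ℕ) (hm : 2 ≤ m) :
    Avoids [0,1,2,0] (typeII a b m p q) := by
  intro h
  obtain ⟨i1,i2,i3,i4,h12,h23,h34,h4,e1,e2,e3⟩ := elim0120 h
  rw [typeII_length a b m p q hm] at h4
  simp only [typeII_getD a b m p q hm] at e1 e2 e3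
  have s1 := VII_spec a b m p q i1 hm
  have s2 := VII_spec a b m p q i2 hm
  have s3 := VII_spec a b m p q i3 hm
  have s4 := VII_spec a b m p q i4 hm
  omega

lemma avoids0101_replicate (n : ℕ) : Avoids [0,1,0,1] (List.replicate n 0) := by
  intro h
  obtain ⟨i1,i2,i3,i4,h12,h23,h34,h4,e1,e2,e3⟩ := elim0101 h
  simp only [List.length_replicate] at h4
  rw [getD_replicate' (by omega), getD_replicate' (by omega)] at e2
  omega

lemma avoids0112_replicate (n : ℕ) : Avoids [0,1,1,2] (List.replicate n 0) := by
  intro h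
  obtain ⟨i1,i2,i3,i4,h12,h23,h34,h4,e1,e2,e3⟩ := elim0112 h
  simp only [List.length_replicate] at h4
  rw [getD_replicate' (by omega), getD_replicate' (by omega)] at e1
  omega

lemma avoids0120_replicate (n : ℕ) : Avoids [0,1,2,0] (List.replicate n 0) := by
  intro h
  obtain ⟨i1,i2,i3,i4,h12,h23,h34,h4,e1,e2,e3⟩ := elim0120 h
  simp only [List.length_replicate] at h4
  rw [getD_replicate' (by omega), getD_replicate' (by omega)] at e2
  omega
/- ### Witnesses for forbidden extensions -/

lemma skip_block {t u : List ℕ} (B : List ℕ) (h : List.Sublist t u) :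
    List.Sublist t (B ++ u) := by
  simpa using (List.nil_sublist B).append h

lemma mem_rep {a : ℕ} (v : ℕ) (ha : 1 ≤ a) : List.Sublist [v] (List.replicate a v) :=
  List.singleton_sublist.2 (by rw [List.mem_replicate]; omega)

lemma mem_rng {s k v : ℕ} (h1 : s ≤ v) (h2 : v < s + k) : List.Sublist [v] (List.range' s k) :=
  List.singleton_sublist.2 (by rw [List.mem_range'_1]; omega)

lemma CI1 {a m p q v : ℕ} (ha : 1 ≤ a) (hm : 1 ≤ m) (hp : 1 ≤ p) (hv : m < v) :
    Contains [0,1,1,2] (typeI a m p q ++ [v]) := by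
  have hx : typeI a m p q ++ [v]
      = List.replicate a 0 ++ (List.range' 1 m ++ (List.replicate p m ++
        (List.replicate q (m-1) ++ [v]))) := by simp [typeI]
  have hs : List.Sublist ([0] ++ ([m] ++ ([m] ++ [v]))) (typeI a m p q ++ [v]) := by
    rw [hx]
    exact (mem_rep 0 ha).append ((mem_rng (by omega) (by omega)).append
      ((mem_rep m hp).append (skip_block _ (List.Sublist.refl [v]))))
  exact intro0112 hs (by omega) rfl (by omega)

lemma CI2 {a m p q v : ℕ} (ha : 1 ≤ a) (h2 : v + 2 ≤ m) :
    Contains [0,1,2,0] (typeI a m p q ++ [v]) := by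
  have hx : typeI a m p q ++ [v]
      = (List.replicate a 0 ++ List.range' 1 m) ++ (List.replicate p m ++
        (List.replicate q (m-1) ++ [v])) := by simp [typeI]
  have hback : List.Sublist [v] (List.replicate p m ++ (List.replicate q (m-1) ++ [v])) :=
    skip_block _ (skip_block _ (List.Sublist.refl [v]))
  have hfront : List.Sublist [v, v+1, v+2] (List.replicate a 0 ++ List.range' 1 m) := by
    rcases Nat.eq_zero_or_pos v with hv0 | hv0
    · subst hv0
      exact (mem_rep 0 ha).append (sublist2_range' (by omega) (by omega) (by omega))
    · exact skip_block _ (sublist3_range' (by omega) (by omega) (by omega) (by omega))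
  have hs : List.Sublist ([v, v+1, v+2] ++ [v]) (typeI a m p q ++ [v]) := by
    rw [hx]; exact hfront.append hback
  exact intro0120 hs (by omega) (by omega) rfl

lemma CI3 {a p q : ℕ} (ha : 1 ≤ a) (hq : 1 ≤ q) :
    Contains [0,1,0,1] (typeI a 1 p q ++ [1]) := by
  have hx : typeI a 1 p q ++ [1]
      = List.replicate a 0 ++ (List.range' 1 1 ++ (List.replicate p 1 ++
        (List.replicate q 0 ++ [1]))) := by simp [typeI]
  have hs : List.Sublist ([0] ++ ([1] ++ ([0] ++ [1]))) (typeI a 1 p q ++ [1]) := by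
    rw [hx]
    exact (mem_rep 0 ha).append ((mem_rng (by omega) (by omega)).append
      (skip_block _ ((mem_rep 0 hq).append (List.Sublist.refl [1]))))
  exact intro0101 hs rfl (by omega) rfl

lemma CI4 {a m p q v : ℕ} (ha : 1 ≤ a) (hm : 2 ≤ m) (hq : 1 ≤ q) (hv : m - 1 < v) :
    Contains [0,1,1,2] (typeI a m p q ++ [v]) := by
  have hx : typeI a m p q ++ [v]
      = List.replicate a 0 ++ (List.range' 1 m ++ (List.replicate p m ++
        (List.replicate q (m-1) ++ [v]))) := by simp [typeI]
  have hs : List.Sublist ([0] ++ ([m-1] ++ ([m-1] ++ [v]))) (typeI a m p q ++ [v]) := by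
    rw [hx]
    exact (mem_rep 0 ha).append ((mem_rng (by omega) (by omega)).append
      (skip_block _ ((mem_rep (m-1) hq).append (List.Sublist.refl [v]))))
  exact intro0112 hs (by omega) rfl (by omega)

lemma typeII_norm (a b m p q v : ℕ) : typeII a b m p q ++ [v]
    = List.replicate a 0 ++ ([1] ++ (List.replicate b 0 ++ (List.range' 2 (m-1) ++
      (List.replicate p m ++ (List.replicate q (m-1) ++ [v]))))) := by simp [typeII]

lemma CII1 {a b m p q v : ℕ} (ha : 1 ≤ a) (hm : 2 ≤ m) (hp : 1 ≤ p) (hv : m < v) :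
    Contains [0,1,1,2] (typeII a b m p q ++ [v]) := by
  have hs : List.Sublist ([0] ++ ([m] ++ ([m] ++ [v]))) (typeII a b m p q ++ [v]) := by
    rw [typeII_norm]
    exact (mem_rep 0 ha).append (skip_block _ (skip_block _
      ((mem_rng (by omega) (by omega)).append
        ((mem_rep m hp).append (skip_block _ (List.Sublist.refl [v]))))))
  exact intro0112 hs (by omega) rfl (by omega)

lemma CII2 {a b m p q v : ℕ} (ha : 1 ≤ a) (h2 : v + 2 ≤ m) :
    Contains [0,1,2,0] (typeII a b m p q ++ [v]) := by
  have hback : List.Sublist [v] (List.replicate p m ++ (List.replicate q (m-1) ++ [v])) :=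
    skip_block _ (skip_block _ (List.Sublist.refl [v]))
  have hs : List.Sublist ([v] ++ ([v+1] ++ ([v+2] ++ [v]))) (typeII a b m p q ++ [v]) := by
    rw [typeII_norm]
    rcases Nat.lt_or_ge v 2 with hv2 | hv2
    · rcases Nat.eq_zero_or_pos v with hv0 | hv0
      · subst hv0
        exact (mem_rep 0 ha).append ((List.Sublist.refl [1]).append
          (skip_block _ ((mem_rng (by omega) (by omega)).append hback)))
      · have hv1 : v = 1 := by omega
        subst hv1
        exact skip_block _ ((List.Sublist.refl [1]).append (skip_block _
          ((sublist2_range' (by omega) (by omega) (by omega)).append hback)))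
    · refine skip_block _ (skip_block _ (skip_block _ ?_))
      exact (sublist3_range' (by omega) (by omega) (by omega) (by omega)).append hback
  exact intro0120 hs (by omega) (by omega) rfl

lemma CII3 {a b p q : ℕ} (ha : 1 ≤ a) (hb : 1 ≤ b) :
    Contains [0,1,0,1] (typeII a b 2 p q ++ [1]) := by
  have hs : List.Sublist ([0] ++ ([1] ++ ([0] ++ [1]))) (typeII a b 2 p q ++ [1]) := by
    rw [typeII_norm]
    exact (mem_rep 0 ha).append ((List.Sublist.refl [1]).append ((mem_rep 0 hb).append
      (skip_block _ (skip_block _ (skip_block _ (List.Sublist.refl [1]))))))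
  exact intro0101 hs rfl (by omega) rfl

lemma CII4 {a b m p q v : ℕ} (ha : 1 ≤ a) (hm : 3 ≤ m) (hq : 1 ≤ q) (hv : m - 1 < v) :
    Contains [0,1,1,2] (typeII a b m p q ++ [v]) := by
  have hs : List.Sublist ([0] ++ ([m-1] ++ ([m-1] ++ [v]))) (typeII a b m p q ++ [v]) := by
    rw [typeII_norm]
    exact (mem_rep 0 ha).append (skip_block _ (skip_block _
      ((mem_rng (by omega) (by omega)).append (skip_block _
        ((mem_rep (m-1) hq).append (List.Sublist.refl [v]))))))
  exact intro0112 hs (by omega) rfl (by omega)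
/- ### Classification -/

def Fam (n : ℕ) (x : List ℕ) : Prop :=
  x = List.replicate n 0 ∨
  (∃ a m p q, 1 ≤ a ∧ 1 ≤ m ∧ a+m+p+q = n ∧ x = typeI a m p q) ∨
  (∃ a b m p q, 1 ≤ a ∧ 1 ≤ b ∧ 2 ≤ m ∧ (1 ≤ q → 3 ≤ m) ∧ a+b+m+p+q = n ∧
    x = typeII a b m p q)

lemma avoids_sublist {p x y : List ℕ} (h : Avoids p x) (hs : List.Sublist y x) :
    Avoids p y := by
  rintro ⟨z, hz, h2, h3⟩
  exact h ⟨z, hz.trans hs, h2, h3⟩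

lemma zeros_append_one (n : ℕ) (hn : 1 ≤ n) :
    List.replicate n 0 ++ [1] = typeI n 1 0 0 := by
  simp [typeI]

lemma typeI_one_append_two (a q : ℕ) :
    typeI a 1 0 q ++ [2] = typeII a q 2 0 0 := by
  simp [typeI, typeII]

lemma classify : ∀ n x, x.length = n → IsAscSeq x → Avoids [0,1,0,1] x →
    Avoids [0,1,1,2] x → Avoids [0,1,2,0] x → Fam n x := by
  intro n
  induction n with
  | zero =>
    intro x hx hasc _ _ _
    exact absurd (List.length_eq_zero_iff.mp hx) hasc.1
  | succ n ih =>
    intro x hx hasc hA hB hC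
    rcases Nat.eq_zero_or_pos n with hn | hn
    · subst hn
      obtain ⟨w, hw⟩ := List.length_eq_one_iff.mp hx
      have h0 := hasc.2.1
      rw [hw] at h0 ⊢
      simp only [List.getD_cons_zero] at h0
      subst h0
      left; rfl
    · have hne : x ≠ [] := hasc.1
      have heq : x.dropLast ++ [x.getLast hne] = x := List.dropLast_append_getLast hne
      set l := x.dropLast with hldef
      set v := x.getLast hne with hvdef
      have hlen_l : l.length = n := by
        rw [hldef, List.length_dropLast, hx]
        omega
      have hlne : l ≠ [] := by
        intro h
        rw [h] at hlen_l
        simp at hlen_l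
        omega
      rw [← heq] at hasc hA hB hC ⊢
      obtain ⟨hascl, hvb⟩ := (isAscSeq_append l hlne v).mp hasc
      have hAl := avoids_sublist hA (List.sublist_append_left l [v])
      have hBl := avoids_sublist hB (List.sublist_append_left l [v])
      have hCl := avoids_sublist hC (List.sublist_append_left l [v])
      rcases ih l hlen_l hascl hAl hBl hCl with hZ |
        ⟨a, m, p, q, ha, hm, hsum, hform⟩ |
        ⟨a, b, m, p, q, ha, hb, hm, hqm, hsum, hform⟩
      · -- all zeros
        rw [hZ] at hvb ⊢
        rw [asc_replicate] at hvb
        interval_cases v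
        · left
          rw [← List.replicate_succ' (n := n) (a := 0)]
        · right; left
          exact ⟨n, 1, 0, 0, hn, le_refl 1, by omega, zeros_append_one n hn⟩
      · -- type I
        rw [hform] at hvb hA hB hC ⊢
        rw [asc_typeI a m p q ha] at hvb
        rcases Nat.lt_or_ge (v+2) (m+1) with h1 | h1
        · -- v ≤ m - 2 : forbidden 0120
          exact absurd (CI2 ha (by omega)) hC
        rcases Nat.lt_or_ge v m with h2 | h2
        · -- v = m - 1 : extend q
          right; left
          refine ⟨a, m, p, q+1, ha, hm, by omega, ?_⟩
          rw [show v = m - 1 by omega]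
          exact (typeI_succ_q a m p q).symm
        rcases Nat.eq_or_lt_of_le h2 with h3 | h3
        · -- v = m
          rcases Nat.eq_zero_or_pos q with hq0 | hq0
          · subst hq0
            right; left
            refine ⟨a, m, p+1, 0, ha, hm, by omega, ?_⟩
            rw [typeI_succ_p]
            simp [h3]
          · rcases Nat.lt_or_ge m 2 with hm1 | hm2
            · have hm1' : m = 1 := by omega
              subst hm1'
              exact absurd (by rw [show v = 1 by omega] at hA ⊢; exact CI3 ha hq0) hA
            · exact absurd (CI4 ha hm2 hq0 (by omega)) hB
        · -- v = m + 1
          have hv1 : v = m + 1 := by omega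
          rcases Nat.eq_zero_or_pos q with hq0 | hq0
          · subst hq0
            rcases Nat.eq_zero_or_pos p with hp0 | hp0
            · subst hp0
              right; left
              refine ⟨a, m+1, 0, 0, ha, by omega, by omega, ?_⟩
              rw [hv1, typeI_succ_m]
            · exact absurd (CI1 ha hm hp0 h3) hB
          · rcases Nat.lt_or_ge m 2 with hm1 | hm2
            · have hm1' : m = 1 := by omega
              subst hm1'
              rcases Nat.eq_zero_or_pos p with hp0 | hp0
              · subst hp0
                right; right
                refine ⟨a, q, 2, 0, 0, ha, hq0, le_refl 2, by omega, by omega, ?_⟩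
                rw [hv1, typeI_one_append_two]
              · exact absurd (CI1 ha hm hp0 h3) hB
            · exact absurd (CI4 ha hm2 hq0 (by omega)) hB
      · -- type II
        rw [hform] at hvb hA hB hC ⊢
        rw [asc_typeII a b m p q ha hm] at hvb
        rcases Nat.lt_or_ge (v+2) (m+1) with h1 | h1
        · exact absurd (CII2 ha (by omega)) hC
        rcases Nat.lt_or_ge v m with h2 | h2
        · -- v = m-1
          rcases Nat.lt_or_ge m 3 with hm2 | hm3
          · have hm2' : m = 2 := by omega
            subst hm2'
            exact absurd (by rw [show v = 1 by omega] at hA ⊢; exact CII3 ha hb) hA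
          · right; right
            refine ⟨a, b, m, p, q+1, ha, hb, hm, fun _ => hm3, by omega, ?_⟩
            rw [show v = m - 1 by omega]
            exact (typeII_succ_q a b m p q).symm
        rcases Nat.eq_or_lt_of_le h2 with h3 | h3
        · -- v = m
          rcases Nat.eq_zero_or_pos q with hq0 | hq0
          · subst hq0
            right; right
            refine ⟨a, b, m, p+1, 0, ha, hb, hm, by omega, by omega, ?_⟩
            rw [typeII_succ_p, h3]
          · exact absurd (CII4 ha (hqm hq0) hq0 (by omega)) hB
        · -- v = m+1
          have hv1 : v = m + 1 := by omega
          rcases Nat.eq_zero_or_pos q with hq0 | hq0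
          · subst hq0
            rcases Nat.eq_zero_or_pos p with hp0 | hp0
            · subst hp0
              right; right
              refine ⟨a, b, m+1, 0, 0, ha, hb, by omega, by omega, by omega, ?_⟩
              rw [hv1, typeII_succ_m a b m (by omega)]
            · exact absurd (CII1 ha hm hp0 h3) hB
          · exact absurd (CII4 ha (hqm hq0) hq0 (by omega)) hB

lemma fam_sound {n : ℕ} {x : List ℕ} (hn : 1 ≤ n) (h : Fam n x) :
    x.length = n ∧ IsAscSeq x ∧ Avoids [0,1,0,1] x ∧ Avoids [0,1,1,2] x ∧
      Avoids [0,1,2,0] x := by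
  rcases h with hZ | ⟨a, m, p, q, ha, hm, hsum, hform⟩ |
    ⟨a, b, m, p, q, ha, hb, hm, hqm, hsum, hform⟩
  · subst hZ
    exact ⟨by simp, isAscSeq_replicate n hn, avoids0101_replicate n,
      avoids0112_replicate n, avoids0120_replicate n⟩
  · subst hform
    exact ⟨by rw [typeI_length]; omega, isAscSeq_typeI a m p q ha,
      avoids0101_typeI a m p q, avoids0112_typeI a m p q, avoids0120_typeI a m p q⟩
  · subst hform
    exact ⟨by rw [typeII_length a b m p q hm]; omega, isAscSeq_typeII a b m p q ha hm,
      avoids0101_typeII a b m p q hm hqm, avoids0112_typeII a b m p q hm,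
      avoids0120_typeII a b m p q hm⟩

lemma fam_iff {n : ℕ} {x : List ℕ} (hn : 1 ≤ n) :
    Fam n x ↔ (x.length = n ∧ IsAscSeq x ∧ Avoids [0,1,0,1] x ∧ Avoids [0,1,1,2] x ∧
      Avoids [0,1,2,0] x) :=
  ⟨fam_sound hn, fun ⟨h1, h2, h3, h4, h5⟩ => classify n x h1 h2 h3 h4 h5⟩
/- ### Stars and bars: weakly increasing tuples as sorted lists -/

def M : ℕ → ℕ → Finset (List ℕ)
  | 0, _ => {[]}
  | (k+1), N => (Finset.range (N+1)).biUnion fun w => (M k w).image (fun l => l ++ [w])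

lemma M_card : ∀ k N, (M k N).card = (N + k).choose k := by
  intro k
  induction k with
  | zero => intro N; simp [M]
  | succ k ih =>
    intro N
    rw [M, Finset.card_biUnion]
    · rw [show ∀ f : ℕ → ℕ, (∑ w ∈ Finset.range (N+1), f w) = ∑ w ∈ Finset.range (N+1), f w
          from fun _ => rfl]
      calc ∑ w ∈ Finset.range (N+1), ((M k w).image (fun l => l ++ [w])).card
          = ∑ w ∈ Finset.range (N+1), (w + k).choose k := by
            apply Finset.sum_congr rfl
            intro w _
            rw [Finset.card_image_of_injOn (fun l1 _ l2 _ h => List.append_cancel_right h), ih]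
        _ = (N + k + 1).choose (k + 1) := Nat.sum_range_add_choose N k
        _ = (N + (k+1)).choose (k+1) := by ring_nf
    · intro w1 _ w2 _ hne
      simp only [Finset.disjoint_left, Finset.mem_image]
      rintro z ⟨l1, _, rfl⟩ ⟨l2, _, h2⟩
      have h3 := congrArg List.getLast? h2
      simp only [List.getLast?_append, List.getLast?_singleton, Option.or_some] at h3
      simp at h3
      omega

lemma M_zero_mem {l : List ℕ} : l ∈ M 0 0 ↔ l = [] := by simp [M]

lemma M3_mem {N : ℕ} {l : List ℕ} :
    l ∈ M 3 N ↔ ∃ u v w, u ≤ v ∧ v ≤ w ∧ w ≤ N ∧ l = [u, v, w] := by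
  show l ∈ (Finset.range (N+1)).biUnion _ ↔ _
  simp only [Finset.mem_biUnion, Finset.mem_range, Finset.mem_image]
  constructor
  · rintro ⟨w, hw, l2, hl2, rfl⟩
    rw [show (M 2) = fun N => (Finset.range (N+1)).biUnion
        fun w => (M 1 w).image (fun l => l ++ [w]) from rfl] at hl2
    simp only [Finset.mem_biUnion, Finset.mem_range, Finset.mem_image] at hl2
    obtain ⟨v, hv, l1, hl1, rfl⟩ := hl2
    rw [show (M 1) = fun N => (Finset.range (N+1)).biUnion
        fun w => (M 0 w).image (fun l => l ++ [w]) from rfl] at hl1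
    simp only [Finset.mem_biUnion, Finset.mem_range, Finset.mem_image] at hl1
    obtain ⟨u, hu, l0, hl0, rfl⟩ := hl1
    have : l0 = [] := by simpa [M] using hl0
    subst this
    exact ⟨u, v, w, by omega, by omega, by omega, rfl⟩
  · rintro ⟨u, v, w, h1, h2, h3, rfl⟩
    refine ⟨w, by omega, [u, v], ?_, rfl⟩
    show [u,v] ∈ (Finset.range (w+1)).biUnion _
    simp only [Finset.mem_biUnion, Finset.mem_range, Finset.mem_image]
    refine ⟨v, by omega, [u], ?_, rfl⟩
    show [u] ∈ (Finset.range (v+1)).biUnion _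
    simp only [Finset.mem_biUnion, Finset.mem_range, Finset.mem_image]
    exact ⟨u, by omega, [], by simp [M], rfl⟩

lemma M4_mem {N : ℕ} {l : List ℕ} :
    l ∈ M 4 N ↔ ∃ u v w t, u ≤ v ∧ v ≤ w ∧ w ≤ t ∧ t ≤ N ∧ l = [u, v, w, t] := by
  show l ∈ (Finset.range (N+1)).biUnion _ ↔ _
  simp only [Finset.mem_biUnion, Finset.mem_range, Finset.mem_image]
  constructor
  · rintro ⟨t, ht, l3, hl3, rfl⟩
    rw [M3_mem] at hl3
    obtain ⟨u, v, w, h1, h2, h3, rfl⟩ := hl3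
    exact ⟨u, v, w, t, h1, h2, h3, by omega, rfl⟩
  · rintro ⟨u, v, w, t, h1, h2, h3, h4, rfl⟩
    exact ⟨t, by omega, [u,v,w], M3_mem.2 ⟨u, v, w, h1, h2, h3, rfl⟩, rfl⟩
/- ### Distinctness and injectivity of representations -/

lemma VI_spec' (a m p q i : ℕ) :
    (i < a → VI a m p q i = 0) ∧ (a ≤ i → i < a+m → VI a m p q i = i-a+1) ∧
    (a+m ≤ i → i < a+m+p → VI a m p q i = m) ∧
    (a+m+p ≤ i → i < a+m+p+q → VI a m p q i = m-1) ∧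
    (a+m+p+q ≤ i → VI a m p q i = 0) := by
  unfold VI; split_ifs <;> omega

lemma VII_spec' (a b m p q i : ℕ) (hm : 2 ≤ m) :
    (i < a → VII a b m p q i = 0) ∧ (i = a → VII a b m p q i = 1) ∧
    (a < i → i < a+1+b → VII a b m p q i = 0) ∧
    (a+1+b ≤ i → i < a+b+m → VII a b m p q i = i-a-b+1) ∧
    (a+b+m ≤ i → i < a+b+m+p → VII a b m p q i = m) ∧
    (a+b+m+p ≤ i → i < a+b+m+p+q → VII a b m p q i = m-1) ∧
    (a+b+m+p+q ≤ i → VII a b m p q i = 0) := by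
  unfold VII; split_ifs <;> omega

lemma D1 {n a m p q : ℕ} (ha : 1 ≤ a) (hm : 1 ≤ m) (hs : a+m+p+q = n) :
    List.replicate n 0 ≠ typeI a m p q := by
  intro h
  have e := congrArg (fun l => l.getD a 0) h
  rw [getD_replicate' (by omega), typeI_getD] at e
  have s := VI_spec' a m p q a
  omega

lemma D2 {n a b m p q : ℕ} (ha : 1 ≤ a) (hm : 2 ≤ m) (hs : a+b+m+p+q = n) :
    List.replicate n 0 ≠ typeII a b m p q := by
  intro h
  have e := congrArg (fun l => l.getD a 0) h
  rw [getD_replicate' (by omega), typeII_getD a b m p q hm] at e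
  have s := VII_spec' a b m p q a hm
  omega

lemma D3 {n a m p q a' b' m' p' q' : ℕ} (ha : 1 ≤ a) (hm : 1 ≤ m)
    (ha' : 1 ≤ a') (hb' : 1 ≤ b') (hm' : 2 ≤ m')
    (hs : a+m+p+q = n) (hs' : a'+b'+m'+p'+q' = n) :
    typeI a m p q ≠ typeII a' b' m' p' q' := by
  intro h
  have H : ∀ i, VI a m p q i = VII a' b' m' p' q' i := fun i => by
    rw [← typeI_getD, h, typeII_getD _ _ _ _ _ hm']
  have e1 := H (min a a')
  have s1 := VI_spec' a m p q (min a a')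
  have t1 := VII_spec' a' b' m' p' q' (min a a') hm'
  have haa : a = a' := by omega
  clear e1 s1 t1
  have e2 := H (a+1)
  have s2 := VI_spec' a m p q (a+1)
  have t2 := VII_spec' a' b' m' p' q' (a+1) hm'
  have hm1 : m = 1 ∧ p = 0 := by omega
  clear e2 s2 t2
  have e3 := H (a'+b'+m'-1)
  have s3 := VI_spec' a m p q (a'+b'+m'-1)
  have t3 := VII_spec' a' b' m' p' q' (a'+b'+m'-1) hm'
  omega

lemma D4 {n a m p q a' m' p' q' : ℕ} (ha : 1 ≤ a) (hm : 1 ≤ m)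
    (ha' : 1 ≤ a') (hm' : 1 ≤ m')
    (hs : a+m+p+q = n) (hs' : a'+m'+p'+q' = n)
    (h : typeI a m p q = typeI a' m' p' q') :
    a = a' ∧ m = m' ∧ p = p' ∧ q = q' := by
  have H : ∀ i, VI a m p q i = VI a' m' p' q' i := fun i => by
    rw [← typeI_getD, h, typeI_getD]
  have e1 := H (min a a')
  have s1 := VI_spec' a m p q (min a a')
  have t1 := VI_spec' a' m' p' q' (min a a')
  have haa : a = a' := by omega
  clear e1 s1 t1
  have e2 := H (a + min m m')
  have s2 := VI_spec' a m p q (a + min m m')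
  have t2 := VI_spec' a' m' p' q' (a + min m m')
  have hmm : m = m' := by omega
  clear e2 s2 t2
  have e3 := H (a + m + min p p')
  have s3 := VI_spec' a m p q (a + m + min p p')
  have t3 := VI_spec' a' m' p' q' (a + m + min p p')
  omega

lemma D5 {n a b m p q a' b' m' p' q' : ℕ} (ha : 1 ≤ a) (hb : 1 ≤ b) (hm : 2 ≤ m)
    (ha' : 1 ≤ a') (hb' : 1 ≤ b') (hm' : 2 ≤ m')
    (hs : a+b+m+p+q = n) (hs' : a'+b'+m'+p'+q' = n)
    (h : typeII a b m p q = typeII a' b' m' p' q') :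
    a = a' ∧ b = b' ∧ m = m' ∧ p = p' ∧ q = q' := by
  have H : ∀ i, VII a b m p q i = VII a' b' m' p' q' i := fun i => by
    rw [← typeII_getD a b m p q hm, h, typeII_getD _ _ _ _ _ hm']
  have e1 := H (min a a')
  have s1 := VII_spec' a b m p q (min a a') hm
  have t1 := VII_spec' a' b' m' p' q' (min a a') hm'
  have haa : a = a' := by omega
  clear e1 s1 t1
  have e2 := H (a + 1 + min b b')
  have s2 := VII_spec' a b m p q (a + 1 + min b b') hm
  have t2 := VII_spec' a' b' m' p' q' (a + 1 + min b b') hm'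
  have hbb : b = b' := by omega
  clear e2 s2 t2
  have e3 := H (a + b + min m m')
  have s3 := VII_spec' a b m p q (a + b + min m m') hm
  have t3 := VII_spec' a' b' m' p' q' (a + b + min m m') hm'
  have hmm : m = m' := by omega
  clear e3 s3 t3
  have e4 := H (a + b + m + min p p')
  have s4 := VII_spec' a b m p q (a + b + m + min p p') hm
  have t4 := VII_spec' a' b' m' p' q' (a + b + m + min p p') hm'
  omega
/- ### The finset of avoiders -/

def FI (n : ℕ) : Finset (List ℕ) :=
  (M 3 (n-2)).image fun l =>
    typeI (l.getD 0 0 + 1) (l.getD 1 0 + 1 - l.getD 0 0) (l.getD 2 0 - l.getD 1 0)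
      (n - 2 - l.getD 2 0)

def FII0 (n : ℕ) : Finset (List ℕ) :=
  (M 3 (n-4)).image fun l =>
    typeII (l.getD 0 0 + 1) (l.getD 1 0 + 1 - l.getD 0 0) (l.getD 2 0 + 2 - l.getD 1 0)
      (n - 4 - l.getD 2 0) 0

def FIIq (n : ℕ) : Finset (List ℕ) :=
  (M 4 (n-6)).image fun l =>
    typeII (l.getD 0 0 + 1) (l.getD 1 0 + 1 - l.getD 0 0) (l.getD 2 0 + 3 - l.getD 1 0)
      (l.getD 3 0 - l.getD 2 0) (n - 5 - l.getD 3 0)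

def F (n : ℕ) : Finset (List ℕ) :=
  insert (List.replicate n 0)
    ((if 2 ≤ n then FI n else ∅) ∪ ((if 4 ≤ n then FII0 n else ∅) ∪
      (if 6 ≤ n then FIIq n else ∅)))


lemma mem_F {n : ℕ} {x : List ℕ} (hn : 1 ≤ n) : x ∈ F n ↔ Fam n x := by
  rw [F, Finset.mem_insert, Finset.mem_union, Finset.mem_union]
  constructor
  · rintro (h | h | h | h)
    · left; exact h
    · split_ifs at h with h2
      swap
      · simp at h
      rw [FI, Finset.mem_image] at h
      obtain ⟨l, hl, rfl⟩ := h
      obtain ⟨u, v, w, h1, h2', h3, rfl⟩ := M3_mem.1 hl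
      right; left
      exact ⟨u+1, v+1-u, w-v, n-2-w, by omega, by omega, by omega, rfl⟩
    · split_ifs at h with h4
      swap
      · simp at h
      rw [FII0, Finset.mem_image] at h
      obtain ⟨l, hl, rfl⟩ := h
      obtain ⟨u, v, w, h1, h2', h3, rfl⟩ := M3_mem.1 hl
      right; right
      exact ⟨u+1, v+1-u, w+2-v, n-4-w, 0, by omega, by omega, by omega, by omega,
        by omega, rfl⟩
    · split_ifs at h with h6
      swap
      · simp at h
      rw [FIIq, Finset.mem_image] at h
      obtain ⟨l, hl, rfl⟩ := h
      obtain ⟨u, v, w, t, h1, h2', h3, h4', rfl⟩ := M4_mem.1 hl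
      right; right
      exact ⟨u+1, v+1-u, w+3-v, t-w, n-5-t, by omega, by omega, by omega, by omega,
        by omega, rfl⟩
  · rintro (h | ⟨a, m, p, q, ha, hm, hsum, rfl⟩ |
      ⟨a, b, m, p, q, ha, hb, hm, hqm, hsum, rfl⟩)
    · left; exact h
    · right; left
      rw [if_pos (show 2 ≤ n by omega), FI, Finset.mem_image]
      refine ⟨[a-1, a+m-2, a+m+p-2], M3_mem.2 ⟨a-1, a+m-2, a+m+p-2, by omega, by omega,
        by omega, rfl⟩, ?_⟩
      show typeI ((a-1)+1) ((a+m-2)+1-(a-1)) ((a+m+p-2)-(a+m-2)) (n-2-(a+m+p-2)) = _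
      rw [show (a-1)+1 = a by omega, show (a+m-2)+1-(a-1) = m by omega,
        show (a+m+p-2)-(a+m-2) = p by omega, show n-2-(a+m+p-2) = q by omega]
    · rcases Nat.eq_zero_or_pos q with hq0 | hq1
      · subst hq0
        right; right; left
        rw [if_pos (show 4 ≤ n by omega), FII0, Finset.mem_image]
        refine ⟨[a-1, a+b-2, a+b+m-4], M3_mem.2 ⟨a-1, a+b-2, a+b+m-4, by omega, by omega,
          by omega, rfl⟩, ?_⟩
        show typeII ((a-1)+1) ((a+b-2)+1-(a-1)) ((a+b+m-4)+2-(a+b-2)) (n-4-(a+b+m-4)) 0 = _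
        rw [show (a-1)+1 = a by omega, show (a+b-2)+1-(a-1) = b by omega,
          show (a+b+m-4)+2-(a+b-2) = m by omega, show n-4-(a+b+m-4) = p by omega]
      · have hm3 := hqm hq1
        right; right; right
        rw [if_pos (show 6 ≤ n by omega), FIIq, Finset.mem_image]
        refine ⟨[a-1, a+b-2, a+b+m-5, a+b+m+p-5], M4_mem.2 ⟨a-1, a+b-2, a+b+m-5, a+b+m+p-5,
          by omega, by omega, by omega, by omega, rfl⟩, ?_⟩
        show typeII ((a-1)+1) ((a+b-2)+1-(a-1)) ((a+b+m-5)+3-(a+b-2))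
          ((a+b+m+p-5)-(a+b+m-5)) (n-5-(a+b+m+p-5)) = _
        rw [show (a-1)+1 = a by omega, show (a+b-2)+1-(a-1) = b by omega,
          show (a+b+m-5)+3-(a+b-2) = m by omega, show (a+b+m+p-5)-(a+b+m-5) = p by omega,
          show n-5-(a+b+m+p-5) = q by omega]
/- ### Cardinality of F -/

lemma FI_card {n : ℕ} (hn : 2 ≤ n) : (FI n).card = (n+1).choose 3 := by
  rw [FI, Finset.card_image_of_injOn, M_card, show n-2+3 = n+1 by omega]
  intro l1 h1 l2 h2 heq
  simp only [Finset.mem_coe] at h1 h2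
  obtain ⟨u, v, w, e1, e2, e3, rfl⟩ := M3_mem.1 h1
  obtain ⟨u', v', w', f1, f2, f3, rfl⟩ := M3_mem.1 h2
  have heq' : typeI (u+1) (v+1-u) (w-v) (n-2-w) =
      typeI (u'+1) (v'+1-u') (w'-v') (n-2-w') := heq
  have := D4 (n := n) (by omega) (by omega) (by omega) (by omega) (by omega) (by omega) heq'
  simp only [List.cons.injEq, and_true]
  omega

lemma FII0_card {n : ℕ} (hn : 4 ≤ n) : (FII0 n).card = (n-1).choose 3 := by
  rw [FII0, Finset.card_image_of_injOn, M_card, show n-4+3 = n-1 by omega]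
  intro l1 h1 l2 h2 heq
  simp only [Finset.mem_coe] at h1 h2
  obtain ⟨u, v, w, e1, e2, e3, rfl⟩ := M3_mem.1 h1
  obtain ⟨u', v', w', f1, f2, f3, rfl⟩ := M3_mem.1 h2
  have heq' : typeII (u+1) (v+1-u) (w+2-v) (n-4-w) 0 =
      typeII (u'+1) (v'+1-u') (w'+2-v') (n-4-w') 0 := heq
  have := D5 (n := n) (by omega) (by omega) (by omega) (by omega) (by omega) (by omega)
    (by omega) (by omega) heq'
  simp only [List.cons.injEq, and_true]
  omega

lemma FIIq_card {n : ℕ} (hn : 6 ≤ n) : (FIIq n).card = (n-2).choose 4 := by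
  rw [FIIq, Finset.card_image_of_injOn, M_card, show n-6+4 = n-2 by omega]
  intro l1 h1 l2 h2 heq
  simp only [Finset.mem_coe] at h1 h2
  obtain ⟨u, v, w, t, e1, e2, e3, e4, rfl⟩ := M4_mem.1 h1
  obtain ⟨u', v', w', t', f1, f2, f3, f4, rfl⟩ := M4_mem.1 h2
  have heq' : typeII (u+1) (v+1-u) (w+3-v) (t-w) (n-5-t) =
      typeII (u'+1) (v'+1-u') (w'+3-v') (t'-w') (n-5-t') := heq
  have := D5 (n := n) (by omega) (by omega) (by omega) (by omega) (by omega) (by omega)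
    (by omega) (by omega) heq'
  simp only [List.cons.injEq, and_true]
  omega

lemma zeros_not_FI {n : ℕ} (hn : 2 ≤ n) : List.replicate n 0 ∉ FI n := by
  rw [FI, Finset.mem_image]
  rintro ⟨l, hl, heq⟩
  obtain ⟨u, v, w, e1, e2, e3, rfl⟩ := M3_mem.1 hl
  have heq' : typeI (u+1) (v+1-u) (w-v) (n-2-w) = List.replicate n 0 := heq
  exact D1 (n := n) (by omega) (by omega) (by omega) heq'.symm

lemma zeros_not_FII0 {n : ℕ} (hn : 4 ≤ n) : List.replicate n 0 ∉ FII0 n := by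
  rw [FII0, Finset.mem_image]
  rintro ⟨l, hl, heq⟩
  obtain ⟨u, v, w, e1, e2, e3, rfl⟩ := M3_mem.1 hl
  have heq' : typeII (u+1) (v+1-u) (w+2-v) (n-4-w) 0 = List.replicate n 0 := heq
  exact D2 (n := n) (by omega) (by omega) (by omega) heq'.symm

lemma zeros_not_FIIq {n : ℕ} (hn : 6 ≤ n) : List.replicate n 0 ∉ FIIq n := by
  rw [FIIq, Finset.mem_image]
  rintro ⟨l, hl, heq⟩
  obtain ⟨u, v, w, t, e1, e2, e3, e4, rfl⟩ := M4_mem.1 hl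
  have heq' : typeII (u+1) (v+1-u) (w+3-v) (t-w) (n-5-t) = List.replicate n 0 := heq
  exact D2 (n := n) (by omega) (by omega) (by omega) heq'.symm

lemma FI_disj_FII0 {n : ℕ} (hn : 4 ≤ n) : Disjoint (FI n) (FII0 n) := by
  rw [Finset.disjoint_left]
  intro x hx hy
  rw [FI, Finset.mem_image] at hx
  rw [FII0, Finset.mem_image] at hy
  obtain ⟨l, hl, rfl⟩ := hx
  obtain ⟨u, v, w, e1, e2, e3, rfl⟩ := M3_mem.1 hl
  obtain ⟨l', hl', heq⟩ := hy
  obtain ⟨u', v', w', f1, f2, f3, rfl⟩ := M3_mem.1 hl'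
  have heq' : typeII (u'+1) (v'+1-u') (w'+2-v') (n-4-w') 0
      = typeI (u+1) (v+1-u) (w-v) (n-2-w) := heq
  exact D3 (n := n) (by omega) (by omega) (by omega) (by omega) (by omega) (by omega)
    (by omega) heq'.symm

lemma FI_disj_FIIq {n : ℕ} (hn : 6 ≤ n) : Disjoint (FI n) (FIIq n) := by
  rw [Finset.disjoint_left]
  intro x hx hy
  rw [FI, Finset.mem_image] at hx
  rw [FIIq, Finset.mem_image] at hy
  obtain ⟨l, hl, rfl⟩ := hx
  obtain ⟨u, v, w, e1, e2, e3, rfl⟩ := M3_mem.1 hl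
  obtain ⟨l', hl', heq⟩ := hy
  obtain ⟨u', v', w', t', f1, f2, f3, f4, rfl⟩ := M4_mem.1 hl'
  have heq' : typeII (u'+1) (v'+1-u') (w'+3-v') (t'-w') (n-5-t')
      = typeI (u+1) (v+1-u) (w-v) (n-2-w) := heq
  exact D3 (n := n) (by omega) (by omega) (by omega) (by omega) (by omega) (by omega)
    (by omega) heq'.symm

lemma FII0_disj_FIIq {n : ℕ} (hn : 6 ≤ n) : Disjoint (FII0 n) (FIIq n) := by
  rw [Finset.disjoint_left]
  intro x hx hy
  rw [FII0, Finset.mem_image] at hx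
  rw [FIIq, Finset.mem_image] at hy
  obtain ⟨l, hl, rfl⟩ := hx
  obtain ⟨u, v, w, e1, e2, e3, rfl⟩ := M3_mem.1 hl
  obtain ⟨l', hl', heq⟩ := hy
  obtain ⟨u', v', w', t', f1, f2, f3, f4, rfl⟩ := M4_mem.1 hl'
  have heq' : typeII (u'+1) (v'+1-u') (w'+3-v') (t'-w') (n-5-t')
      = typeII (u+1) (v+1-u) (w+2-v) (n-4-w) 0 := heq
  have := D5 (n := n) (by omega) (by omega) (by omega) (by omega) (by omega) (by omega)
    (by omega) (by omega) heq'.symm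
  omega

lemma F_card {n : ℕ} (hn : 2 ≤ n) :
    (F n).card = 1 + (n+1).choose 3 + (n-1).choose 3 + (n-2).choose 4 := by
  rw [F, if_pos hn]
  rcases Nat.lt_or_ge n 4 with h4 | h4
  · rw [if_neg (by omega), if_neg (by omega)]
    simp only [Finset.union_empty]
    rw [Finset.card_insert_of_notMem (zeros_not_FI hn), FI_card hn,
      Nat.choose_eq_zero_of_lt (show n-1 < 3 by omega),
      Nat.choose_eq_zero_of_lt (show n-2 < 4 by omega)]
    omega
  rcases Nat.lt_or_ge n 6 with h6 | h6
  · rw [if_pos h4, if_neg (by omega)]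
    simp only [Finset.union_empty]
    rw [Finset.card_insert_of_notMem (by
        simp only [Finset.mem_union]
        rintro (h | h)
        · exact zeros_not_FI hn h
        · exact zeros_not_FII0 h4 h),
      Finset.card_union_of_disjoint (FI_disj_FII0 h4), FI_card hn, FII0_card h4,
      Nat.choose_eq_zero_of_lt (show n-2 < 4 by omega)]
    omega
  · rw [if_pos h4, if_pos h6]
    rw [Finset.card_insert_of_notMem (by
        simp only [Finset.mem_union]
        rintro (h | h | h)
        · exact zeros_not_FI hn h
        · exact zeros_not_FII0 h4 h
        · exact zeros_not_FIIq h6 h),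
      Finset.card_union_of_disjoint (by
        rw [Finset.disjoint_union_right]
        exact ⟨FI_disj_FII0 h4, FI_disj_FIIq h6⟩),
      Finset.card_union_of_disjoint (FII0_disj_FIIq h6),
      FI_card hn, FII0_card h4, FIIq_card h6]
    omega
/- ### Arithmetic: binomials to polynomials -/

lemma c2' : ∀ k : ℕ, 2 * (k+1).choose 2 = (k+1)*k := by
  intro k
  induction k with
  | zero => rfl
  | succ j ih =>
    rw [show j+1+1 = (j+1)+1 from rfl, Nat.choose_succ_succ (j+1) 1, Nat.choose_one_right]
    ring_nf
    ring_nf at ih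
    omega

lemma c3' : ∀ k : ℕ, 6 * (k+2).choose 3 = (k+2)*(k+1)*k := by
  intro k
  induction k with
  | zero => rfl
  | succ j ih =>
    show 6 * ((j+3).choose 3) = (j+3)*(j+2)*(j+1)
    have key : (j+3).choose 3 = (j+2).choose 2 + (j+2).choose 3 :=
      Nat.choose_succ_succ (j+2) 2
    have h2 : 2 * ((j+2).choose 2) = (j+2)*(j+1) := c2' (j+1)
    have expand : (j+3)*(j+2)*(j+1) = (j+2)*(j+1)*j + 3*((j+2)*(j+1)) := by ring
    omega

lemma c4' : ∀ k : ℕ, 24 * (k+3).choose 4 = (k+3)*(k+2)*(k+1)*k := by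
  intro k
  induction k with
  | zero => rfl
  | succ j ih =>
    show 24 * ((j+4).choose 4) = (j+4)*(j+3)*(j+2)*(j+1)
    have key : (j+4).choose 4 = (j+3).choose 3 + (j+3).choose 4 :=
      Nat.choose_succ_succ (j+3) 3
    have h3 : 6 * ((j+3).choose 3) = (j+3)*(j+2)*(j+1) := c3' (j+1)
    have expand : (j+4)*(j+3)*(j+2)*(j+1)
        = (j+3)*(j+2)*(j+1)*j + 4*((j+3)*(j+2)*(j+1)) := by ring
    omega

lemma count_formula {n : ℕ} (hn : 2 ≤ n) :
    (24 : ℤ) * ((1 + (n+1).choose 3 + (n-1).choose 3 + (n-2).choose 4 : ℕ) : ℤ)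
      = (n : ℤ)^4 - 6*(n : ℤ)^3 + 47*(n : ℤ)^2 - 114*(n : ℤ) + 120 := by
  rcases Nat.lt_or_ge n 6 with h6 | h6
  · interval_cases n <;> norm_num [Nat.choose]
  · obtain ⟨j, rfl⟩ : ∃ j, n = j + 6 := ⟨n - 6, by omega⟩
    have e1 : j+6+1 = (j+5)+2 := by ring
    have e2 : j+6-1 = (j+3)+2 := by omega
    have e3 : j+6-2 = (j+1)+3 := by omega
    rw [e1, e2, e3]
    have h1 := c3' (j+5)
    have h2 := c3' (j+3)
    have h3 := c4' (j+1)
    have h1' : (6:ℤ) * ((j+5+2).choose 3 : ℤ) = ((j:ℤ)+7)*((j:ℤ)+6)*((j:ℤ)+5) := by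
      exact_mod_cast congrArg (Nat.cast : ℕ → ℤ) h1
    have h2' : (6:ℤ) * ((j+3+2).choose 3 : ℤ) = ((j:ℤ)+5)*((j:ℤ)+4)*((j:ℤ)+3) := by
      exact_mod_cast congrArg (Nat.cast : ℕ → ℤ) h2
    have h3' : (24:ℤ) * ((j+1+3).choose 4 : ℤ) = ((j:ℤ)+4)*((j:ℤ)+3)*((j:ℤ)+2)*((j:ℤ)+1) := by
      exact_mod_cast congrArg (Nat.cast : ℕ → ℤ) h3
    push_cast
    push_cast at h1' h2' h3'
    nlinarith [h1', h2', h3']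

/- ### Main theorem -/

lemma card_avoiders {n : ℕ} (hn : 1 ≤ n) :
    Nat.card {x : List ℕ // x.length = n ∧ IsAscSeq x ∧ Avoids [0, 1, 0, 1] x ∧
      Avoids [0, 1, 1, 2] x ∧ Avoids [0, 1, 2, 0] x} = (F n).card := by
  rw [← Nat.card_eq_finsetCard]
  apply Nat.card_congr
  apply Equiv.subtypeEquivRight
  intro x
  rw [mem_F hn, fam_iff hn]

theorem stmt_8 :
    (∀ n : ℕ, 2 ≤ n →
      (24 : ℤ) * (Nat.card {x : List ℕ // x.length = n ∧ IsAscSeq x ∧ Avoids [0, 1, 0, 1] x ∧ Avoids [0, 1, 1, 2] x ∧ Avoids [0, 1, 2, 0] x} : ℤ) =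
        (n : ℤ) ^ 4 - 6 * (n : ℤ) ^ 3 + 47 * (n : ℤ) ^ 2 - 114 * (n : ℤ) + 120) ∧
    Nat.card {x : List ℕ // x.length = 1 ∧ IsAscSeq x ∧ Avoids [0, 1, 0, 1] x ∧ Avoids [0, 1, 1, 2] x ∧ Avoids [0, 1, 2, 0] x} = 1 := by
  constructor
  · intro n hn
    rw [card_avoiders (by omega), F_card hn]
    exact count_formula hn
  · rw [card_avoiders (by omega)]
    rw [F]
    norm_num
end

section
/- For n >= 1, the number of ascent sequences of length n avoiding the three patterns 0102, 0112, and 0120 equals 2^{n-1} + C(n, 3). -/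
/-!
An avoider is built by appending one entry at a time, and the three patterns leave almost no
choice. A `0/1`-sequence starting with `0` avoids all three patterns; appending an entry `c ≥ 2`
to it creates `0102` or `0112` unless every entry but the last is `0`, and then the ascent bound
forces the sequence to be `0⋯01` and `c = 2`.
A staircase `0^(a+1) 1 2 ⋯ m m^i (m-1)^j` with `m ≥ 2` can only be extended by `m - 1`, by
`m` while `j = 0`, or by `m + 1` while `i = j = 0`: anything smaller creates `0120`, anything
else `0112`, and `m + 2` already exceeds the ascent bound. So the avoiders of length `n` are the
`2^(n-1)` binary sequences and the staircases, which correspond to the `C(n, 3)` solutions of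
`a + (m - 2) + i + j + 3 = n`.
-/

lemma List.sublist_four_iff {α : Type*} {b₀ b₁ b₂ b₃ d : α} {l : List α} :
    [b₀, b₁, b₂, b₃].Sublist l ↔ ∃ t₀ t₁ t₂ t₃, t₀ < t₁ ∧ t₁ < t₂ ∧ t₂ < t₃ ∧ t₃ < l.length ∧
      l.getD t₀ d = b₀ ∧ l.getD t₁ d = b₁ ∧ l.getD t₂ d = b₂ ∧ l.getD t₃ d = b₃ := by
  rw [List.sublist_iff_exists_fin_orderEmbedding_get_eq]
  constructor
  · rintro ⟨f, hf⟩
    have hmono : StrictMono f := f.strictMono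
    refine ⟨f ⟨0, by simp⟩, f ⟨1, by simp⟩, f ⟨2, by simp⟩, f ⟨3, by simp⟩,
      hmono (by simp), hmono (by simp), hmono (by simp), (f _).2, ?_, ?_, ?_, ?_⟩ <;>
    · rw [List.getD_eq_getElem _ _ (f _).2, ← List.get_eq_getElem, ← hf]
      rfl
  · rintro ⟨t₀, t₁, t₂, t₃, h₀₁, h₁₂, h₂₃, h₃, rfl, rfl, rfl, rfl⟩
    let t : Fin 4 → Fin l.length := ![⟨t₀, by omega⟩, ⟨t₁, by omega⟩, ⟨t₂, by omega⟩, ⟨t₃, h₃⟩]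
    have ht : StrictMono t := by
      intro u v huv
      fin_cases u <;> fin_cases v <;> simp_all [t, Fin.lt_def] <;> omega
    refine ⟨OrderEmbedding.ofStrictMono t ht, fun i => ?_⟩
    fin_cases i <;> simp [t] <;> rw [List.getElem?_eq_getElem (by omega), Option.getD_some]

lemma List.eq_of_length_eq_of_getD_eq {α : Type*} {l l' : List α} (d : α)
    (hl : l.length = l'.length) (h : ∀ t < l.length, l.getD t d = l'.getD t d) : l = l' :=
  List.ext_getElem hl fun t h₁ h₂ => by
    simpa only [List.getD_eq_getElem _ _ h₁, List.getD_eq_getElem _ _ h₂] using h t h₁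

lemma List.getD_append_singleton {α : Type*} (l : List α) (c d : α) (t : ℕ) :
    (l ++ [c]).getD t d = if t < l.length then l.getD t d else if t = l.length then c else d := by
  grind

lemma List.map_range_append_singleton {α : Type*} {f g : ℕ → α} {n : ℕ}
    (h : ∀ t < n, f t = g t) : (List.range n).map f ++ [g n] = (List.range (n + 1)).map g := by
  rw [List.range_succ, List.map_append, List.map_singleton,
    List.map_congr_left fun t ht => h t (List.mem_range.1 ht)]

def ascBelow (l : List ℕ) (m : ℕ) : ℕ :=
  ((List.range m).filter (fun j => l.getD j 0 < l.getD (j + 1) 0)).length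

lemma asc_eq_ascBelow (l : List ℕ) : asc l = ascBelow l (l.length - 1) := rfl

lemma asc_take {l : List ℕ} {m : ℕ} (hm : m ≤ l.length) :
    asc (l.take m) = ascBelow l (m - 1) := by
  rw [asc_eq_ascBelow, List.length_take, min_eq_left hm, ascBelow, ascBelow]
  congr 1
  refine List.filter_congr fun j hj => ?_
  simp only [List.mem_range] at hj
  simp only [List.getD_eq_getElem?_getD, List.getElem?_take_of_lt (by omega : j < m),
    List.getElem?_take_of_lt (by omega : j + 1 < m)]

lemma ascBelow_succ (l : List ℕ) (m : ℕ) :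
    ascBelow l (m + 1) = ascBelow l m + if l.getD m 0 < l.getD (m + 1) 0 then 1 else 0 := by
  simp only [ascBelow, List.range_succ, List.filter_append, List.length_append,
    List.filter_singleton]
  split_ifs with h <;>
    simp only [h, decide_true, decide_false, cond_true, cond_false, List.length_singleton,
      List.length_nil]

lemma asc_le_of_forall_ascent_mem {l : List ℕ} {lo hi : ℕ}
    (h : ∀ j, l.getD j 0 < l.getD (j + 1) 0 → lo ≤ j ∧ j < hi) : asc l ≤ hi - lo := by
  rw [asc_eq_ascBelow, ascBelow, ← Nat.card_Ico lo hi,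
    ← List.toFinset_card_of_nodup (List.nodup_range.filter _)]
  refine Finset.card_le_card fun j hj => ?_
  simp only [List.mem_toFinset, List.mem_filter, decide_eq_true_eq] at hj
  exact Finset.mem_Ico.2 (h j hj.2)

/-- Entries growing by at most one per step never exceed the ascents before them. -/
lemma isAscSeq_of_getD_succ_le {l : List ℕ} (hne : l ≠ []) (h0 : l.getD 0 0 = 0)
    (hstep : ∀ t, t + 1 < l.length → l.getD (t + 1) 0 ≤ l.getD t 0 + 1) : IsAscSeq l := by
  have hle : ∀ m, m < l.length → l.getD m 0 ≤ ascBelow l m := by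
    intro m
    induction m with
    | zero => exact fun _ => h0.trans_le (Nat.zero_le _)
    | succ m ih =>
      intro hm
      have := ih (by omega)
      have := hstep m hm
      rw [ascBelow_succ]
      split_ifs <;> omega
  refine ⟨hne, h0, fun i hi hil => ?_⟩
  obtain ⟨m, rfl⟩ : ∃ m, i = m + 1 := ⟨i - 1, by omega⟩
  rw [asc_take hil.le, Nat.add_sub_cancel]
  have := hle m (by omega)
  have := hstep m hil
  omega

lemma IsAscSeq.of_append_singleton {y : List ℕ} {c : ℕ} (h : IsAscSeq (y ++ [c]))
    (hy : y ≠ []) : IsAscSeq y ∧ c ≤ 1 + asc y := by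
  have hpos : 0 < y.length := List.length_pos_iff.2 hy
  obtain ⟨-, h0, hsteps⟩ := h
  refine ⟨⟨hy, by rwa [List.getD_append _ _ _ _ hpos] at h0, fun i hi hiy => ?_⟩, ?_⟩
  · have := hsteps i hi (by simp; omega)
    rwa [List.getD_append _ _ _ _ hiy, List.take_append_of_le_length hiy.le] at this
  · have := hsteps y.length hpos (by simp)
    rwa [List.getD_append_right _ _ _ _ le_rfl, Nat.sub_self, List.take_left] at this

def SameOrderType (y p : List ℕ) : Prop :=
  y.length = p.length ∧ ∀ i j, i < p.length → j < p.length →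
    (y.getD i 0 < y.getD j 0 ↔ p.getD i 0 < p.getD j 0)

lemma contains_four_iff {p₀ p₁ p₂ p₃ : ℕ} {x : List ℕ} :
    Contains [p₀, p₁, p₂, p₃] x ↔ ∃ t₀ t₁ t₂ t₃, t₀ < t₁ ∧ t₁ < t₂ ∧ t₂ < t₃ ∧ t₃ < x.length ∧
      SameOrderType [x.getD t₀ 0, x.getD t₁ 0, x.getD t₂ 0, x.getD t₃ 0] [p₀, p₁, p₂, p₃] := by
  constructor
  · rintro ⟨y, hyx, hy⟩
    obtain ⟨b₀, b₁, b₂, b₃, rfl⟩ : ∃ b₀ b₁ b₂ b₃, y = [b₀, b₁, b₂, b₃] := by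
      match y, hy.1 with
      | [b₀, b₁, b₂, b₃], _ => exact ⟨b₀, b₁, b₂, b₃, rfl⟩
    obtain ⟨t₀, t₁, t₂, t₃, h₀₁, h₁₂, h₂₃, h₃, rfl, rfl, rfl, rfl⟩ :=
      List.sublist_four_iff (d := 0).1 hyx
    exact ⟨t₀, t₁, t₂, t₃, h₀₁, h₁₂, h₂₃, h₃, hy⟩
  · rintro ⟨t₀, t₁, t₂, t₃, h₀₁, h₁₂, h₂₃, h₃, hy⟩
    exact ⟨_, List.sublist_four_iff.2 ⟨t₀, t₁, t₂, t₃, h₀₁, h₁₂, h₂₃, h₃, rfl, rfl, rfl, rfl⟩, hy⟩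

lemma sameOrderType_0102_iff {b₀ b₁ b₂ b₃ : ℕ} :
    SameOrderType [b₀, b₁, b₂, b₃] [0, 1, 0, 2] ↔ b₀ < b₁ ∧ b₂ = b₀ ∧ b₁ < b₃ := by
  constructor
  · rintro ⟨-, h⟩
    have := h 0 1; have := h 0 2; have := h 2 0; have := h 1 3
    simp_all
    omega
  · rintro ⟨h₀₁, h₂₀, h₁₃⟩
    refine ⟨rfl, fun i j hi hj => ?_⟩
    simp only [List.length_cons, List.length_nil] at hi hj
    interval_cases i <;> interval_cases j <;> simp <;> omega

lemma sameOrderType_0112_iff {b₀ b₁ b₂ b₃ : ℕ} :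
    SameOrderType [b₀, b₁, b₂, b₃] [0, 1, 1, 2] ↔ b₀ < b₁ ∧ b₂ = b₁ ∧ b₁ < b₃ := by
  constructor
  · rintro ⟨-, h⟩
    have := h 0 1; have := h 1 2; have := h 2 1; have := h 1 3
    simp_all
    omega
  · rintro ⟨h₀₁, h₂₁, h₁₃⟩
    refine ⟨rfl, fun i j hi hj => ?_⟩
    simp only [List.length_cons, List.length_nil] at hi hj
    interval_cases i <;> interval_cases j <;> simp <;> omega

lemma sameOrderType_0120_iff {b₀ b₁ b₂ b₃ : ℕ} :
    SameOrderType [b₀, b₁, b₂, b₃] [0, 1, 2, 0] ↔ b₀ < b₁ ∧ b₁ < b₂ ∧ b₃ = b₀ := by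
  constructor
  · rintro ⟨-, h⟩
    have := h 0 1; have := h 1 2; have := h 0 3; have := h 3 0
    simp_all
    omega
  · rintro ⟨h₀₁, h₁₂, h₃₀⟩
    refine ⟨rfl, fun i j hi hj => ?_⟩
    simp only [List.length_cons, List.length_nil] at hi hj
    interval_cases i <;> interval_cases j <;> simp <;> omega

lemma contains_0102_iff {x : List ℕ} :
    Contains [0, 1, 0, 2] x ↔ ∃ t₀ t₁ t₂ t₃, t₀ < t₁ ∧ t₁ < t₂ ∧ t₂ < t₃ ∧ t₃ < x.length ∧
      x.getD t₀ 0 < x.getD t₁ 0 ∧ x.getD t₂ 0 = x.getD t₀ 0 ∧ x.getD t₁ 0 < x.getD t₃ 0 := by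
  simp only [contains_four_iff, sameOrderType_0102_iff]

lemma contains_0112_iff {x : List ℕ} :
    Contains [0, 1, 1, 2] x ↔ ∃ t₀ t₁ t₂ t₃, t₀ < t₁ ∧ t₁ < t₂ ∧ t₂ < t₃ ∧ t₃ < x.length ∧
      x.getD t₀ 0 < x.getD t₁ 0 ∧ x.getD t₂ 0 = x.getD t₁ 0 ∧ x.getD t₁ 0 < x.getD t₃ 0 := by
  simp only [contains_four_iff, sameOrderType_0112_iff]

lemma contains_0120_iff {x : List ℕ} :
    Contains [0, 1, 2, 0] x ↔ ∃ t₀ t₁ t₂ t₃, t₀ < t₁ ∧ t₁ < t₂ ∧ t₂ < t₃ ∧ t₃ < x.length ∧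
      x.getD t₀ 0 < x.getD t₁ 0 ∧ x.getD t₁ 0 < x.getD t₂ 0 ∧ x.getD t₃ 0 = x.getD t₀ 0 := by
  simp only [contains_four_iff, sameOrderType_0120_iff]

lemma Avoids.of_sublist {p x y : List ℕ} (h : Avoids p x) (hyx : y.Sublist x) : Avoids p y :=
  fun ⟨z, hzy, hz⟩ => h ⟨z, hzy.trans hyx, hz⟩

lemma avoids_of_forall_le_one {p x : List ℕ} (hx : ∀ a ∈ x, a ≤ 1) {i j k : ℕ}
    (hi : i < p.length) (hj : j < p.length) (hk : k < p.length)
    (hij : p.getD i 0 < p.getD j 0) (hjk : p.getD j 0 < p.getD k 0) : Avoids p x := by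
  rintro ⟨y, hyx, -, hy⟩
  have hy_le : y.getD k 0 ≤ 1 := by
    rcases lt_or_ge k y.length with hky | hky
    · exact hx _ (hyx.subset (List.getD_eq_getElem _ _ hky ▸ List.getElem_mem hky))
    · exact (List.getD_eq_default _ _ hky).trans_le zero_le_one
  have := (hy i j hi hj).2 hij
  have := (hy j k hj hk).2 hjk
  omega

def binarySeq (v : List Bool) : List ℕ := 0 :: v.map Bool.toNat

@[simp] lemma length_binarySeq (v : List Bool) : (binarySeq v).length = v.length + 1 := by
  simp [binarySeq]

lemma binarySeq_injective : Function.Injective binarySeq := fun v w h =>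
  (List.map_injective_iff.2 fun a b hab => by cases a <;> cases b <;> simp_all)
    (List.cons_injective h)

lemma le_one_of_mem_binarySeq {v : List Bool} {a : ℕ} (ha : a ∈ binarySeq v) : a ≤ 1 := by
  simp only [binarySeq, List.mem_cons, List.mem_map] at ha
  rcases ha with rfl | ⟨b, -, rfl⟩
  exacts [zero_le_one, Bool.toNat_le b]

lemma getD_binarySeq_le_one (v : List Bool) (t : ℕ) : (binarySeq v).getD t 0 ≤ 1 := by
  rcases lt_or_ge t (binarySeq v).length with ht | ht
  · exact le_one_of_mem_binarySeq (List.getD_eq_getElem _ _ ht ▸ List.getElem_mem ht)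
  · exact (List.getD_eq_default _ _ ht).trans_le zero_le_one

lemma isAscSeq_binarySeq (v : List Bool) : IsAscSeq (binarySeq v) :=
  isAscSeq_of_getD_succ_le (List.cons_ne_nil _ _) rfl fun t _ => by
    have := getD_binarySeq_le_one v (t + 1)
    omega

lemma avoids_binarySeq (v : List Bool) :
    Avoids [0, 1, 0, 2] (binarySeq v) ∧ Avoids [0, 1, 1, 2] (binarySeq v) ∧
      Avoids [0, 1, 2, 0] (binarySeq v) :=
  ⟨avoids_of_forall_le_one (fun _ => le_one_of_mem_binarySeq) (i := 0) (j := 1) (k := 3)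
      (by simp) (by simp) (by simp) (by simp) (by simp),
    avoids_of_forall_le_one (fun _ => le_one_of_mem_binarySeq) (i := 0) (j := 1) (k := 3)
      (by simp) (by simp) (by simp) (by simp) (by simp),
    avoids_of_forall_le_one (fun _ => le_one_of_mem_binarySeq) (i := 0) (j := 1) (k := 2)
      (by simp) (by simp) (by simp) (by simp) (by simp)⟩

def stairVal (a k i t : ℕ) : ℕ := if t ≤ a + k + 2 + i then min (t - a) (k + 2) else k + 1

/-- The sequence `0^(a+1) 1 2 ⋯ (k+2) (k+2)^i (k+1)^j`. -/
def stairSeq (a k i j : ℕ) : List ℕ := (List.range (a + k + i + j + 3)).map (stairVal a k i)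

@[simp] lemma length_stairSeq (a k i j : ℕ) : (stairSeq a k i j).length = a + k + i + j + 3 := by
  simp [stairSeq]

lemma getD_stairSeq (a k i j t : ℕ) :
    (stairSeq a k i j).getD t 0 = if t < a + k + i + j + 3 then stairVal a k i t else 0 := by
  split_ifs with ht
  · simp [stairSeq, ht]
  · exact List.getD_eq_default _ _ (by simpa using ht)

lemma isAscSeq_stairSeq (a k i j : ℕ) : IsAscSeq (stairSeq a k i j) := by
  refine isAscSeq_of_getD_succ_le (by simp [← List.length_pos_iff]) ?_ fun t _ => ?_ <;>
  · simp only [getD_stairSeq, stairVal]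
    split_ifs <;> omega

lemma avoids_stairSeq (a k i j : ℕ) :
    Avoids [0, 1, 0, 2] (stairSeq a k i j) ∧ Avoids [0, 1, 1, 2] (stairSeq a k i j) ∧
      Avoids [0, 1, 2, 0] (stairSeq a k i j) := by
  simp only [Avoids, contains_0102_iff, contains_0112_iff, contains_0120_iff, length_stairSeq,
    getD_stairSeq, stairVal, not_exists]
  refine ⟨?_, ?_, ?_⟩ <;>
  · intro t₀ t₁ t₂ t₃ h
    split_ifs at h <;> omega

lemma asc_stairSeq_le (a k i j : ℕ) : asc (stairSeq a k i j) ≤ k + 2 := by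
  have := asc_le_of_forall_ascent_mem (l := stairSeq a k i j) (lo := a) (hi := a + k + 2)
    fun t ht => by
      simp only [getD_stairSeq, stairVal] at ht
      split_ifs at ht <;> omega
  omega

lemma stairSeq_inj {a k i j a' k' i' j' : ℕ} (h : stairSeq a k i j = stairSeq a' k' i' j') :
    a = a' ∧ k = k' ∧ i = i' ∧ j = j' := by
  have hlen := congrArg List.length h
  simp only [length_stairSeq] at hlen
  have hval : ∀ t < a + k + i + j + 3, stairVal a k i t = stairVal a' k' i' t := fun t ht => by
    have := congrArg (·.getD t 0) h
    simp only [getD_stairSeq, ht, show t < a' + k' + i' + j' + 3 by omega, if_true] at this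
    exact this
  have ha : a = a' := by
    have h₁ := hval (a + 1) (by omega)
    have h₂ := hval (a' + 1) (by omega)
    simp only [stairVal] at h₁ h₂
    split_ifs at h₁ h₂ <;> omega
  subst ha
  have hk : k = k' := by
    have h₁ := hval (a + k + 2) (by omega)
    have h₂ := hval (a + k' + 2) (by omega)
    simp only [stairVal] at h₁ h₂
    split_ifs at h₁ h₂ <;> omega
  subst hk
  have hi : i = i' := by
    have h₁ := hval (a + k + 2 + i) (by omega)
    have h₂ := hval (a + k + 2 + i') (by omega)
    simp only [stairVal] at h₁ h₂
    split_ifs at h₁ h₂ <;> omega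
  exact ⟨rfl, rfl, hi, by omega⟩

lemma binarySeq_ne_stairSeq (v : List Bool) (a k i j : ℕ) : binarySeq v ≠ stairSeq a k i j := by
  intro h
  have := getD_binarySeq_le_one v (a + k + 2)
  rw [h, getD_stairSeq] at this
  simp only [stairVal] at this
  split_ifs at this <;> omega

lemma stairSeq_append_k_add_one (a k i j : ℕ) :
    stairSeq a k i j ++ [k + 1] = stairSeq a k i (j + 1) := by
  rw [stairSeq, stairSeq, show a + k + i + (j + 1) + 3 = a + k + i + j + 3 + 1 by omega,
    ← List.map_range_append_singleton (n := a + k + i + j + 3) (g := stairVal a k i)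
      fun _ _ => rfl, stairVal, if_neg (by omega)]

lemma stairSeq_append_k_add_two (a k i : ℕ) :
    stairSeq a k i 0 ++ [k + 2] = stairSeq a k (i + 1) 0 := by
  rw [stairSeq, stairSeq, show a + k + (i + 1) + 0 + 3 = a + k + i + 0 + 3 + 1 by omega,
    ← List.map_range_append_singleton (n := a + k + i + 0 + 3) (f := stairVal a k i)
      fun t ht => by simp only [stairVal]; split_ifs <;> omega,
    stairVal, if_pos (by omega), min_eq_right (by omega)]

lemma stairSeq_append_k_add_three (a k : ℕ) :
    stairSeq a k 0 0 ++ [k + 3] = stairSeq a (k + 1) 0 0 := by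
  rw [stairSeq, stairSeq, show a + (k + 1) + 0 + 0 + 3 = a + k + 0 + 0 + 3 + 1 by omega,
    ← List.map_range_append_singleton (n := a + k + 0 + 0 + 3) (f := stairVal a k 0)
      fun t ht => by simp only [stairVal]; split_ifs <;> omega,
    stairVal, if_pos (by omega), min_eq_right (by omega)]

lemma getD_stairSeq_append (a k i j c t : ℕ) :
    (stairSeq a k i j ++ [c]).getD t 0 =
      if t < a + k + i + j + 3 then stairVal a k i t
      else if t = a + k + i + j + 3 then c else 0 := by
  simp only [List.getD_append_singleton, length_stairSeq, getD_stairSeq]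
  split_ifs <;> rfl

lemma contains_0120_stairSeq_append {a k i j c : ℕ} (hc : c ≤ k) :
    Contains [0, 1, 2, 0] (stairSeq a k i j ++ [c]) :=
  contains_0120_iff.2 ⟨a + c, a + c + 1, a + c + 2, a + k + i + j + 3, by omega, by omega,
    by omega, by simp, by simp only [getD_stairSeq_append, stairVal]; split_ifs <;> omega⟩

lemma contains_0112_stairSeq_append_of_j_ne_zero {a k i j c : ℕ} (hj : j ≠ 0)
    (hc : k + 2 ≤ c) : Contains [0, 1, 1, 2] (stairSeq a k i j ++ [c]) :=
  contains_0112_iff.2 ⟨0, a + k + 1, a + k + i + 3, a + k + i + j + 3, by omega, by omega,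
    by omega, by simp, by simp only [getD_stairSeq_append, stairVal]; split_ifs <;> omega⟩

lemma contains_0112_stairSeq_append_of_i_ne_zero {a k i j c : ℕ} (hi : i ≠ 0)
    (hc : k + 3 ≤ c) : Contains [0, 1, 1, 2] (stairSeq a k i j ++ [c]) :=
  contains_0112_iff.2 ⟨0, a + k + 2, a + k + 3, a + k + i + j + 3, by omega, by omega,
    by omega, by simp, by simp only [getD_stairSeq_append, stairVal]; split_ifs <;> omega⟩

lemma stairSeq_append_cases {a k i j c : ℕ} (hc : c ≤ 1 + asc (stairSeq a k i j))
    (h0112 : Avoids [0, 1, 1, 2] (stairSeq a k i j ++ [c]))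
    (h0120 : Avoids [0, 1, 2, 0] (stairSeq a k i j ++ [c])) :
    ∃ a' k' i' j', stairSeq a k i j ++ [c] = stairSeq a' k' i' j' := by
  have := asc_stairSeq_le a k i j
  have hk : k < c := not_le.1 fun h => h0120 (contains_0120_stairSeq_append h)
  obtain rfl | hc : c = k + 1 ∨ k + 2 ≤ c := by omega
  · exact ⟨a, k, i, j + 1, stairSeq_append_k_add_one a k i j⟩
  obtain rfl : j = 0 := by_contra fun hj => h0112 (contains_0112_stairSeq_append_of_j_ne_zero hj hc)
  obtain rfl | hc : c = k + 2 ∨ k + 3 ≤ c := by omega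
  · exact ⟨a, k, i + 1, 0, stairSeq_append_k_add_two a k i⟩
  obtain rfl : i = 0 := by_contra fun hi => h0112 (contains_0112_stairSeq_append_of_i_ne_zero hi hc)
  obtain rfl : c = k + 3 := by omega
  exact ⟨a, k + 1, 0, 0, stairSeq_append_k_add_three a k⟩

lemma getD_binarySeq_eq_zero_of_avoids {v : List Bool} {c : ℕ} (hc : 2 ≤ c)
    (h0102 : Avoids [0, 1, 0, 2] (binarySeq v ++ [c]))
    (h0112 : Avoids [0, 1, 1, 2] (binarySeq v ++ [c])) {r : ℕ} (hr : r < v.length) :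
    (binarySeq v).getD r 0 = 0 := by
  have h₀ : (binarySeq v).getD 0 0 = 0 := rfl
  by_contra hne
  have := getD_binarySeq_le_one v r
  have := getD_binarySeq_le_one v (r + 1)
  have hr₀ : r ≠ 0 := by rintro rfl; exact hne h₀
  by_cases hnext : (binarySeq v).getD (r + 1) 0 = 0
  · refine h0102 (contains_0102_iff.2 ⟨0, r, r + 1, v.length + 1, ?_⟩)
    simp only [List.getD_append_singleton, length_binarySeq, List.length_append,
      List.length_singleton]
    split_ifs <;> omega
  · refine h0112 (contains_0112_iff.2 ⟨0, r, r + 1, v.length + 1, ?_⟩)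
    simp only [List.getD_append_singleton, length_binarySeq, List.length_append,
      List.length_singleton]
    split_ifs <;> omega

lemma asc_binarySeq_le_getD_length {v : List Bool}
    (h : ∀ r < v.length, (binarySeq v).getD r 0 = 0) :
    asc (binarySeq v) ≤ (binarySeq v).getD v.length 0 := by
  have := asc_le_of_forall_ascent_mem (l := binarySeq v) (lo := v.length - 1)
    (hi := v.length - 1 + (binarySeq v).getD v.length 0) fun j hj => by
      rcases lt_trichotomy (j + 1) v.length with hlt | heq | hgt
      · rw [h _ hlt] at hj
        omega
      · rw [heq] at hj
        omega
      · rw [List.getD_eq_default _ _ (show (binarySeq v).length ≤ j + 1 by simp; omega)] at hj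
        omega
  omega

lemma binarySeq_append_two {v : List Bool} (h : ∀ r < v.length, (binarySeq v).getD r 0 = 0)
    (hlast : (binarySeq v).getD v.length 0 = 1) :
    binarySeq v ++ [2] = stairSeq (v.length - 1) 0 0 0 := by
  have hv : v.length ≠ 0 := fun hv => by
    have h₀ : (binarySeq v).getD 0 0 = 0 := rfl
    rw [hv] at hlast
    omega
  refine List.eq_of_length_eq_of_getD_eq 0 (by simp; omega) fun t ht => ?_
  simp only [List.length_append, length_binarySeq, List.length_singleton] at ht
  simp only [List.getD_append_singleton, length_binarySeq, getD_stairSeq, stairVal]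
  rcases lt_trichotomy t v.length with ht' | rfl | ht'
  · simp only [h t ht']
    split_ifs <;> omega
  · simp only [hlast]
    split_ifs <;> omega
  · split_ifs <;> omega

lemma binarySeq_append_cases {v : List Bool} {c : ℕ} (hc : c ≤ 1 + asc (binarySeq v))
    (h0102 : Avoids [0, 1, 0, 2] (binarySeq v ++ [c]))
    (h0112 : Avoids [0, 1, 1, 2] (binarySeq v ++ [c])) :
    (∃ w, binarySeq v ++ [c] = binarySeq w) ∨ ∃ a, binarySeq v ++ [c] = stairSeq a 0 0 0 := by
  rcases le_or_gt c 1 with hc₁ | hc₂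
  · exact Or.inl ⟨v ++ [decide (c = 1)], by interval_cases c <;> simp [binarySeq]⟩
  have hzero := fun r => getD_binarySeq_eq_zero_of_avoids (r := r) hc₂ h0102 h0112
  have := asc_binarySeq_le_getD_length hzero
  have := getD_binarySeq_le_one v v.length
  obtain rfl : c = 2 := by omega
  exact Or.inr ⟨_, binarySeq_append_two hzero (by omega)⟩

lemma eq_binarySeq_or_stairSeq {x : List ℕ} (hx : IsAscSeq x)
    (h0102 : Avoids [0, 1, 0, 2] x) (h0112 : Avoids [0, 1, 1, 2] x)
    (h0120 : Avoids [0, 1, 2, 0] x) :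
    (∃ v, x = binarySeq v) ∨ ∃ a k i j, x = stairSeq a k i j := by
  induction x using List.reverseRecOn with
  | nil => exact absurd rfl hx.1
  | append_singleton y c ih =>
    rcases eq_or_ne y [] with rfl | hy
    · obtain rfl : c = 0 := hx.2.1
      exact Or.inl ⟨[], rfl⟩
    obtain ⟨hy_asc, hc⟩ := hx.of_append_singleton hy
    have hy_sub := List.sublist_append_left y [c]
    rcases ih hy_asc (h0102.of_sublist hy_sub) (h0112.of_sublist hy_sub)
        (h0120.of_sublist hy_sub) with ⟨v, rfl⟩ | ⟨a, k, i, j, rfl⟩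
    · rcases binarySeq_append_cases hc h0102 h0112 with ⟨w, hw⟩ | ⟨a, ha⟩
      exacts [Or.inl ⟨w, hw⟩, Or.inr ⟨a, 0, 0, 0, ha⟩]
    · obtain ⟨a', k', i', j', h⟩ := stairSeq_append_cases hc h0112 h0120
      exact Or.inr ⟨a', k', i', j', h⟩

lemma ncard_length_eq_bool (m : ℕ) : {v : List Bool | v.length = m}.ncard = 2 ^ m := by
  rw [← Nat.card_coe_set_eq, Set.coe_ofPred, ← List.Vector, Nat.card_eq_fintype_card, card_vector,
    Fintype.card_bool]

lemma finite_sum_add_eq (k n : ℕ) : {f : Fin (k + 1) → ℕ | ∑ i, f i + k = n}.Finite :=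
  (Set.finite_Iic fun _ => n).subset fun f hf i => by
    have := Finset.single_le_sum (fun j _ => Nat.zero_le (f j)) (Finset.mem_univ i)
    simp only [Set.mem_ofPred_eq] at hf
    exact (show f i ≤ n by omega)

/-- Stars and bars. -/
lemma ncard_sum_add_eq (k n : ℕ) : {f : Fin (k + 1) → ℕ | ∑ i, f i + k = n}.ncard = n.choose k := by
  rcases lt_or_ge n k with hn | hn
  · have hempty : {f : Fin (k + 1) → ℕ | ∑ i, f i + k = n} = ∅ :=
      Set.eq_empty_of_forall_notMem fun f hf => by simp only [Set.mem_ofPred_eq] at hf; omega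
    rw [Nat.choose_eq_zero_of_lt hn, hempty, Set.ncard_empty]
  obtain ⟨m, rfl⟩ := Nat.exists_eq_add_of_le' hn
  have hset : {f : Fin (k + 1) → ℕ | ∑ i, f i + k = m + k} = {f | ∑ i, f i = m} := by
    simp
  rw [hset, ← Nat.card_coe_set_eq, Set.coe_ofPred,
    ← Nat.card_congr (Sym.equivNatSumOfFintype (Fin (k + 1)) m), Sym.natCard_sym_eq_choose,
    Nat.card_eq_fintype_card, Fintype.card_fin, show k + 1 + m - 1 = m + k by omega,
    Nat.choose_symm_add]

lemma injective_stairSeq_fin :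
    Function.Injective fun f : Fin 4 → ℕ => stairSeq (f 0) (f 1) (f 2) (f 3) := fun f g h => by
  obtain ⟨h₀, h₁, h₂, h₃⟩ := stairSeq_inj h
  ext i
  fin_cases i <;> assumption

lemma setOf_avoiders_eq {n : ℕ} (hn : 1 ≤ n) :
    {x : List ℕ | x.length = n ∧ IsAscSeq x ∧ Avoids [0, 1, 0, 2] x ∧ Avoids [0, 1, 1, 2] x ∧
        Avoids [0, 1, 2, 0] x} =
      binarySeq '' {v | v.length = n - 1} ∪
        (fun f : Fin 4 → ℕ => stairSeq (f 0) (f 1) (f 2) (f 3)) '' {f | ∑ i, f i + 3 = n} := by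
  ext x
  simp only [Set.mem_ofPred_eq, Set.mem_union, Set.mem_image, Fin.sum_univ_four]
  constructor
  · rintro ⟨rfl, hx, h0102, h0112, h0120⟩
    rcases eq_binarySeq_or_stairSeq hx h0102 h0112 h0120 with ⟨v, rfl⟩ | ⟨a, k, i, j, rfl⟩
    · exact Or.inl ⟨v, by simp, rfl⟩
    · exact Or.inr ⟨![a, k, i, j], by simp, rfl⟩
  · rintro (⟨v, hv, rfl⟩ | ⟨f, hf, rfl⟩)
    · exact ⟨by simp; omega, isAscSeq_binarySeq v, avoids_binarySeq v⟩
    · exact ⟨by simp; omega, isAscSeq_stairSeq _ _ _ _, avoids_stairSeq _ _ _ _⟩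

theorem stmt_9 (n : ℕ) (hn : 1 ≤ n) :
    Nat.card {x : List ℕ // x.length = n ∧ IsAscSeq x ∧ Avoids [0, 1, 0, 2] x ∧ Avoids [0, 1, 1, 2] x ∧ Avoids [0, 1, 2, 0] x} = 2 ^ (n - 1) + Nat.choose n 3 := by
  have hdisj : Disjoint (binarySeq '' {v | v.length = n - 1})
      ((fun f : Fin 4 → ℕ => stairSeq (f 0) (f 1) (f 2) (f 3)) '' {f | ∑ i, f i + 3 = n}) :=
    Set.disjoint_left.2 fun _ ⟨v, _, hv⟩ ⟨f, _, hf⟩ =>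
      binarySeq_ne_stairSeq v _ _ _ _ (hv.trans hf.symm)
  rw [← Set.coe_ofPred, Nat.card_coe_set_eq, setOf_avoiders_eq hn,
    Set.ncard_union_eq hdisj ((List.finite_length_eq Bool _).image _)
      ((finite_sum_add_eq 3 n).image _),
    Set.ncard_image_of_injective _ binarySeq_injective,
    Set.ncard_image_of_injective _ injective_stairSeq_fin, ncard_length_eq_bool, ncard_sum_add_eq]
end
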